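/- Let s and t be n-colored rooted trees, v a vertex of t and p ∈ {1,…,n} a color, and let u = s ∘_v^p t be the tree obtained by grafting s onto v by an edge of color p. Then a_s · a_t · n(s,t,u) = a_u · m(v,t), where a_x denotes the order of the automorphism group of the n-colored rooted tree x, m(v,t) denotes the size of the orbit of v under the automorphism group of t, and n(s,t,u) denotes the number of edges e of u such that deleting e leaves the component not containing the root isomorphic to s and the component containing the root isomorphic to t (as n-colored rooted trees). -/

import Mathlib

/- Core combinatorics of n-edge-colored rooted forests.

A forest is encoded by a finite set of vertices (natural numbers), a
parent function (pointing one step towards the root) and a coloring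
function assigning to each non-root vertex the color of the edge
connecting it to its parent.  Well-formedness (`WF`) asks that the parent
function is supported on the vertex set and is acyclic. -/

open scoped Classical

noncomputable section

structure PForest (n : ℕ) where
  verts : Finset ℕ
  parent : ℕ → Option ℕ
  color : ℕ → Fin n

namespace PForest

variable {n : ℕ}

/-- well-formedness: edges join vertices, and the parent relation is
acyclic. -/
def WF (t : PForest n) : Prop :=
  (∀ v w : ℕ, t.parent v = some w → v ∈ t.verts ∧ w ∈ t.verts) ∧
    ∃ rk : ℕ → ℕ, ∀ v w : ℕ, t.parent v = some w → rk w < rk v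

/-- one step towards the root: `w` is the parent of `v`. -/
def Step (t : PForest n) (v w : ℕ) : Prop := t.parent v = some w

/-- `w` lies (weakly) on the path from `v` to the root of its component. -/
def Anc (t : PForest n) (v w : ℕ) : Prop := Relation.ReflTransGen t.Step v w

def nearestAncAux (t : PForest n) (S : Finset ℕ) : ℕ → ℕ → Option ℕ
  | 0, _ => none
  | fuel + 1, v =>
    match t.parent v with
    | none => none
    | some w => if w ∈ S then some w else nearestAncAux t S fuel w

/-- the first vertex of `S` strictly below `v`; this is the parent of `v`
in the subforest induced on `S`. -/
def nearestAnc (t : PForest n) (S : Finset ℕ) (v : ℕ) : Option ℕ :=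
  nearestAncAux t S t.verts.card v

def lastBeforeAux (t : PForest n) (S : Finset ℕ) : ℕ → ℕ → ℕ
  | 0, v => v
  | fuel + 1, v =>
    match t.parent v with
    | none => v
    | some w => if w ∈ S then v else lastBeforeAux t S fuel w

/-- the last vertex on the path from `v` down to `nearestAnc t S v`
before reaching it; the color of the edge of the induced subforest below
`v` is the (ambient) color of this vertex. -/
def lastBefore (t : PForest n) (S : Finset ℕ) (v : ℕ) : ℕ :=
  lastBeforeAux t S t.verts.card v

/-- `pcount t S s j v` is the number of edges of (induced) color `j` on
the path from `v` to the root of its component in the subforest of `t`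
induced on `S`, whose lower vertex lies outside `s`.  (Edges of the
induced subforest are indexed by their upper vertex `x`; the lower vertex
is `nearestAnc t S x` and the induced color is the ambient color of
`lastBefore t S x`.) -/
def pcount (t : PForest n) (S s : Finset ℕ) (j : Fin n) (v : ℕ) : ℕ :=
  (S.filter fun x => t.Anc v x ∧ t.color (t.lastBefore S x) = j ∧
      ∃ w, t.nearestAnc S x = some w ∧ w ∉ s).card

/-- the subforest of `u` induced on `S`, as a forest in its own right. -/
def restrict (u : PForest n) (S : Finset ℕ) : PForest n where
  verts := S ∩ u.verts
  parent := fun v => if v ∈ S ∩ u.verts then u.nearestAnc S v else none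
  color := fun v => u.color (u.lastBefore S v)

/-- a forest is a (nonempty) tree when it has exactly one root. -/
def IsTree (t : PForest n) : Prop :=
  (t.verts.filter fun v => t.parent v = none).card = 1

/-- `e` is an isomorphism of n-colored forests from `s` to `t`: a
bijection of the vertices preserving the parent relation and the colors
of edges. -/
def IsIsoFn (s t : PForest n) (e : {x // x ∈ s.verts} ≃ {x // x ∈ t.verts}) : Prop :=
  (∀ v w : {x // x ∈ s.verts},
      s.parent (v : ℕ) = some (w : ℕ) ↔ t.parent ((e v : ℕ)) = some ((e w : ℕ))) ∧
    ∀ v : {x // x ∈ s.verts}, (s.parent (v : ℕ)).isSome →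
      t.color ((e v : ℕ)) = s.color (v : ℕ)

/-- isomorphism of n-colored forests. -/
def PIso (s t : PForest n) : Prop := ∃ e, IsIsoFn s t e

end PForest

/-- a (well-formed, nonempty) n-colored rooted tree. -/
def TreeObj (n : ℕ) : Type := {t : PForest n // t.WF ∧ t.IsTree}

/-- isomorphism classes of n-colored rooted trees. -/
def TreeClass (n : ℕ) : Type := Quot fun a b : TreeObj n => PForest.PIso a.1 b.1

/-- the one-vertex tree. -/
def unitTree (n : ℕ) [NeZero n] : PForest n :=
  ⟨{0}, fun _ => none, fun _ => 0⟩

theorem unitTree_wf (n : ℕ) [NeZero n] : (unitTree n).WF :=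
  ⟨fun v w h => by simp [unitTree] at h, ⟨id, fun v w h => by simp [unitTree] at h⟩⟩

theorem unitTree_isTree (n : ℕ) [NeZero n] : (unitTree n).IsTree := by
  simp [PForest.IsTree, unitTree]

def defaultTreeObj (n : ℕ) [NeZero n] : TreeObj n :=
  ⟨unitTree n, unitTree_wf n, unitTree_isTree n⟩

/-- the isomorphism class of a tree (junk value: the class of the
one-vertex tree, if the given forest is not a well-formed tree). -/
def mkClass {n : ℕ} [NeZero n] (t : PForest n) : TreeClass n :=
  if h : t.WF ∧ t.IsTree then Quot.mk _ (⟨t, h⟩ : TreeObj n)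
  else Quot.mk _ (defaultTreeObj n)

end

noncomputable section

namespace PForest

variable {n : ℕ}

/-- grafting of s onto the vertex v of t by an edge of color p: the
disjoint union of s and t (t relabelled by doubling, s by doubling plus
one) with one new edge, of color p, joining the root of s to v. -/
def graft (s t : PForest n) (v : ℕ) (p : Fin n) : PForest n where
  verts := t.verts.image (fun x => 2 * x) ∪ s.verts.image (fun x => 2 * x + 1)
  parent := fun x =>
    if x % 2 = 0 then (t.parent (x / 2)).map fun w => 2 * w
    else
      match s.parent (x / 2) with
      | some w => some (2 * w + 1)
      | none => if x / 2 ∈ s.verts then some (2 * v) else none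
  color := fun x =>
    if x % 2 = 0 then t.color (x / 2)
    else
      match s.parent (x / 2) with
      | some _ => s.color (x / 2)
      | none => p

/-- the vertices lying (weakly) above x: the component not containing the
root after deleting the edge below x. -/
def aboveSet (u : PForest n) (x : ℕ) : Finset ℕ :=
  u.verts.filter fun y => u.Anc y x

/-- n(s,t,u): the number of edges of u (indexed by their upper vertex)
whose deletion leaves the component not containing the root isomorphic to
s and the component containing the root isomorphic to t. -/
def nCount (s t u : PForest n) : ℕ :=
  (u.verts.filter fun x => (u.parent x).isSome ∧
    PIso (u.restrict (u.aboveSet x)) s ∧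
    PIso (u.restrict (u.verts \ u.aboveSet x)) t).card

/-- the order of the automorphism group of the n-colored forest t. -/
def autCount (t : PForest n) : ℕ :=
  Nat.card {e : {x // x ∈ t.verts} ≃ {x // x ∈ t.verts} // IsIsoFn t t e}

/-- the size of the orbit of the vertex v under the automorphism group. -/
def orbitCount (t : PForest n) (v : ℕ) (hv : v ∈ t.verts) : ℕ :=
  Nat.card {w : {x // x ∈ t.verts} //
    ∃ e : {x // x ∈ t.verts} ≃ {x // x ∈ t.verts}, IsIsoFn t t e ∧ e ⟨v, hv⟩ = w}

end PForest

end

/-!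
Edges are recorded by their upper vertices. Let `x₀ = 2 * root s + 1` be the upper vertex of the
grafted edge of `u = s ∘_v^p t`. Orbit–stabilizer for `Aut u` acting on vertices gives
`a_u = |Aut u · x₀| · |Stab x₀|`, and restriction to the two sides identifies `Stab x₀` with
`Aut s × Stab_{Aut t} v`, of order `a_s · a_t / m(v,t)`. So it remains to show that the orbit of
`x₀` consists of the upper vertices of the edges counted by `n(s,t,u)`.

Automorphisms carry `x₀` to such vertices. Conversely, a counting argument puts any other such
vertex at `2a` with `a` in `t` off the path from `v` to the root, and the grafted branch can be
exchanged with the branch above `2a` as soon as the rest `r` of `t` has an automorphism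
exchanging `v` with the parent `y` of `a`. The part of `u` below `2a` is `s ∘_v r` and is a copy
of `t ≅ s ∘_y r`, so this follows from cancellation (`s ∘_v^p r ≅ s ∘_w^q r` forces `p = q` and
an automorphism of `r` carrying `v` to `w`, proved by induction on `r` with the same exchange
argument) and from the fact that an automorphism carrying `v` to `w` can be traded for one
swapping them.
-/

lemma Set.BijOn.sdiff_of_image_eq {α β : Type*} {f : α → β} {S A : Set α} {T B : Set β}
    (h : Set.BijOn f S T) (hA : A ⊆ S) (himg : f '' A = B) : Set.BijOn f (S \ A) (T \ B) := by
  have := (h.injOn.mono (Set.sdiff_subset : S \ A ⊆ S)).bijOn_image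
  rwa [h.injOn.image_sdiff_subset hA, h.image_eq, himg] at this

lemma Finset.bijOn_ite {α β : Type*} [DecidableEq α] [DecidableEq β] {S A : Finset α}
    {T B : Finset β} {g₁ g₂ : α → β} (hA : A ⊆ S) (hB : B ⊆ T)
    (h₁ : Set.BijOn g₁ A B) (h₂ : Set.BijOn g₂ ↑(S \ A) ↑(T \ B)) :
    Set.BijOn (fun z => if z ∈ A then g₁ z else g₂ z) S T := by
  have e₁ : Set.BijOn (fun z => if z ∈ A then g₁ z else g₂ z) A B :=
    h₁.congr fun z hz => (if_pos (Finset.mem_coe.mp hz)).symm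
  have e₂ : Set.BijOn (fun z => if z ∈ A then g₁ z else g₂ z) ↑(S \ A) ↑(T \ B) :=
    h₂.congr fun z hz => (if_neg (Finset.mem_sdiff.mp hz).2).symm
  have hdisj : Disjoint (A : Set α) ↑(S \ A) := by
    rw [Finset.disjoint_coe]; exact Finset.disjoint_sdiff
  have := e₁.union e₂ ((Set.injOn_union hdisj).mpr ⟨e₁.injOn, e₂.injOn,
    fun x hx y hy hxy => (Finset.mem_sdiff.mp (e₂.mapsTo hy)).2 (hxy ▸ e₁.mapsTo hx)⟩)
  rwa [← Finset.coe_union, ← Finset.coe_union, Finset.union_sdiff_of_subset hA,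
    Finset.union_sdiff_of_subset hB] at this

lemma Finset.bijOn_swap {α : Type*} [DecidableEq α] [Nonempty α] {S A B : Finset α}
    {M : α → α} (hA : A ⊆ S) (hB : B ⊆ S) (hAB : Disjoint A B) (hM : Set.BijOn M A B) :
    Set.BijOn (fun z => if z ∈ A then M z else if z ∈ B then Function.invFunOn M A z else z)
      S S := by
  have hB' : B ⊆ S \ A := fun z hz => Finset.mem_sdiff.mpr ⟨hB hz, Finset.disjoint_right.mp hAB hz⟩
  have hA' : A ⊆ S \ B := fun z hz => Finset.mem_sdiff.mpr ⟨hA hz, Finset.disjoint_left.mp hAB hz⟩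
  exact Finset.bijOn_ite hA hB hM (Finset.bijOn_ite hB' hA'
    (Set.BijOn.symm hM.invOn_invFunOn.symm hM) (g₂ := id)
    (by rw [sdiff_right_comm]; exact Set.bijOn_id _))

lemma Finset.bijOn_image_of_injective {α β : Type*} [DecidableEq β] {f : α → β}
    (hf : Function.Injective f) (S : Finset α) : Set.BijOn f S (S.image f) := by
  rw [Finset.coe_image]
  exact hf.bijOn_image

lemma MulAction.card_orbit_mul_card_stabilizer (G : Type*) {X : Type*} [Group G] [MulAction G X]
    (b : X) :
    Nat.card (MulAction.orbit G b) * Nat.card (MulAction.stabilizer G b) = Nat.card G := by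
  rw [← Nat.card_prod]
  exact Nat.card_congr (MulAction.orbitProdStabilizerEquivGroup G b)

noncomputable section

namespace PForest

variable {n : ℕ}

section Ancestry

variable {t : PForest n}

lemma anc_of_parent {v w : ℕ} (h : t.parent v = some w) : t.Anc v w :=
  Relation.ReflTransGen.single h

lemma anc_head {v w z : ℕ} (h : t.parent v = some w) (h2 : t.Anc w z) : t.Anc v z :=
  Relation.ReflTransGen.head h h2

lemma eq_or_anc_parent {v w : ℕ} (h : t.Anc v w) :
    v = w ∨ ∃ c, t.parent v = some c ∧ t.Anc c w :=
  Relation.ReflTransGen.cases_head h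

lemma rank_le_of_anc {rk : ℕ → ℕ} (hrk : ∀ v w, t.parent v = some w → rk w < rk v)
    {v w : ℕ} (h : t.Anc v w) : rk w ≤ rk v := by
  induction h with
  | refl => exact le_rfl
  | tail _ h2 ih => exact (hrk _ _ h2).le.trans ih

lemma rank_lt_of_anc {rk : ℕ → ℕ} (hrk : ∀ v w, t.parent v = some w → rk w < rk v)
    {v w : ℕ} (h : t.Anc v w) (hne : v ≠ w) : rk w < rk v := by
  obtain h | ⟨c, hc, h2⟩ := eq_or_anc_parent h
  · exact absurd h hne
  · exact (rank_le_of_anc hrk h2).trans_lt (hrk _ _ hc)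

lemma anc_antisymm (ht : t.WF) {v w : ℕ} (h1 : t.Anc v w) (h2 : t.Anc w v) : v = w := by
  obtain ⟨-, rk, hrk⟩ := ht
  by_contra hne
  exact (rank_lt_of_anc hrk h1 hne).not_ge (rank_lt_of_anc hrk h2 (Ne.symm hne)).le

lemma not_anc_of_parent (ht : t.WF) {v w : ℕ} (hp : t.parent v = some w) : ¬ t.Anc w v := by
  obtain ⟨-, rk, hrk⟩ := ht
  exact fun h => (rank_le_of_anc hrk h).not_gt (hrk _ _ hp)

lemma anc_total {x a b : ℕ} (h1 : t.Anc x a) (h2 : t.Anc x b) : t.Anc a b ∨ t.Anc b a := by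
  induction h1 using Relation.ReflTransGen.head_induction_on with
  | refl => exact Or.inl h2
  | head hc h1' ih =>
    obtain rfl | ⟨c', hc', h2'⟩ := eq_or_anc_parent h2
    · exact Or.inr (Relation.ReflTransGen.head hc h1')
    · exact ih (Option.some_injective _ ((hc' : t.parent _ = _).symm.trans hc) ▸ h2')

lemma eq_of_anc_of_parent_eq (ht : t.WF) {x b b' z : ℕ} (h1 : t.Anc x b) (h2 : t.Anc x b')
    (hb : t.parent b = some z) (hb' : t.parent b' = some z) : b = b' := by
  have key : ∀ c c', t.Anc c c' → t.parent c = some z → t.parent c' = some z → c = c' := by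
    intro c c' h hc hc'
    obtain h | ⟨d, hd, h'⟩ := eq_or_anc_parent h
    · exact h
    · cases Option.some_injective _ (hd.symm.trans hc)
      exact absurd h' (not_anc_of_parent ht hc')
  rcases anc_total h1 h2 with h | h
  · exact key _ _ h hb hb'
  · exact (key _ _ h hb' hb).symm

end Ancestry

section Root

variable {t : PForest n}

def root (t : PForest n) : ℕ :=
  if h : (t.verts.filter fun v => t.parent v = none).Nonempty then
    (t.verts.filter fun v => t.parent v = none).min' h else 0

lemma IsTree.filter_eq (h1 : t.IsTree) :
    (t.verts.filter fun v => t.parent v = none) = {root t} := by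
  obtain ⟨a, ha⟩ := Finset.card_eq_one.mp h1
  have hne : (t.verts.filter fun v => t.parent v = none).Nonempty := by
    rw [ha]; exact Finset.singleton_nonempty a
  have hr : root t = a := by
    rw [root, dif_pos hne]
    exact Finset.mem_singleton.mp (ha ▸ Finset.min'_mem _ hne)
  rw [hr, ha]

lemma root_mem (h1 : t.IsTree) : root t ∈ t.verts :=
  (Finset.mem_filter.mp (h1.filter_eq ▸ Finset.mem_singleton_self (root t))).1

lemma parent_root (h1 : t.IsTree) : t.parent (root t) = none := by
  have h := h1.filter_eq ▸ Finset.mem_singleton_self (root t)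
  exact (Finset.mem_filter.mp h).2

lemma eq_root (h1 : t.IsTree) {v : ℕ} (hv : v ∈ t.verts) (hp : t.parent v = none) :
    v = root t :=
  Finset.mem_singleton.mp (h1.filter_eq ▸ Finset.mem_filter.mpr ⟨hv, hp⟩)

lemma eq_root_of_root_anc (h1 : t.IsTree) {b : ℕ} (h : t.Anc (root t) b) : b = root t := by
  obtain h | ⟨c, hc, -⟩ := eq_or_anc_parent h
  · exact h.symm
  · simp [parent_root h1] at hc

lemma anc_root (ht : t.WF) (h1 : t.IsTree) {v : ℕ} (hv : v ∈ t.verts) :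
    t.Anc v (root t) := by
  obtain ⟨hm, rk, hrk⟩ := ht
  induction hr : rk v using Nat.strong_induction_on generalizing v with
  | _ N ih =>
    cases hp : t.parent v with
    | none => exact eq_root h1 hv hp ▸ Relation.ReflTransGen.refl
    | some w => exact anc_head hp (ih _ (hr ▸ hrk _ _ hp) (hm _ _ hp).2 rfl)

lemma exists_anc_parent_eq {v r : ℕ} (h : t.Anc v r) (hne : v ≠ r) :
    ∃ b, t.Anc v b ∧ t.parent b = some r := by
  induction h using Relation.ReflTransGen.head_induction_on with
  | refl => exact absurd rfl hne
  | head hc h' ih =>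
    rename_i x c
    by_cases hcr : c = r
    · exact ⟨x, Relation.ReflTransGen.refl, hcr ▸ hc⟩
    · obtain ⟨b, hb, hbr⟩ := ih hcr
      exact ⟨b, anc_head hc hb, hbr⟩

end Root

section NearestAnc

variable {t : PForest n}

def strictAnc (t : PForest n) (v : ℕ) : Finset ℕ :=
  t.verts.filter fun w => t.Anc v w ∧ w ≠ v

lemma strictAnc_of_parent (ht : t.WF) {v w : ℕ} (hp : t.parent v = some w) :
    t.strictAnc v = insert w (t.strictAnc w) := by
  ext z
  simp only [strictAnc, Finset.mem_insert, Finset.mem_filter]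
  constructor
  · rintro ⟨hz, hanc, hne⟩
    obtain h | ⟨c, hc, h2⟩ := eq_or_anc_parent hanc
    · exact absurd h.symm hne
    · cases Option.some_injective _ (hc.symm.trans hp)
      by_cases hzw : z = w
      · exact Or.inl hzw
      · exact Or.inr ⟨hz, h2, hzw⟩
  · rintro (rfl | ⟨hz, hanc, hne⟩)
    · exact ⟨(ht.1 _ _ hp).2, anc_of_parent hp,
        fun e => not_anc_of_parent ht hp (e ▸ Relation.ReflTransGen.refl)⟩
    · exact ⟨hz, anc_head hp hanc, fun e => not_anc_of_parent ht hp (e ▸ hanc)⟩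

lemma card_strictAnc_lt {v : ℕ} (hv : v ∈ t.verts) : (t.strictAnc v).card < t.verts.card := by
  refine (Finset.card_le_card fun z hz => ?_).trans_lt (Finset.card_erase_lt_of_mem hv)
  simp only [strictAnc, Finset.mem_filter] at hz
  exact Finset.mem_erase.mpr ⟨hz.2.2, hz.1⟩

/-- The fuel `t.verts.card` of `nearestAnc` suffices: it exceeds the number of strict
ancestors. -/
lemma nearestAncAux_eq_none (ht : t.WF) (S : Finset ℕ) :
    ∀ fuel v, (t.strictAnc v).card < fuel → (∀ w ∈ t.strictAnc v, w ∉ S) →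
      t.nearestAncAux S fuel v = none := by
  intro fuel
  induction fuel with
  | zero => intro v h; omega
  | succ fuel ih =>
    intro v h hS
    cases hp : t.parent v with
    | none => simp [nearestAncAux, hp]
    | some w =>
      rw [strictAnc_of_parent ht hp] at h hS
      have hwS : w ∉ S := hS w (Finset.mem_insert_self w _)
      have hw : w ∉ t.strictAnc w := by simp [strictAnc]
      rw [Finset.card_insert_of_notMem hw] at h
      simp [nearestAncAux, hp, hwS,
        ih w (by omega) fun z hz => hS z (Finset.mem_insert_of_mem hz)]

lemma nearestAnc_eq_none (ht : t.WF) {S : Finset ℕ} {v : ℕ} (hv : v ∈ t.verts)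
    (hS : ∀ w ∈ t.strictAnc v, w ∉ S) : t.nearestAnc S v = none :=
  nearestAncAux_eq_none ht S _ v (card_strictAnc_lt hv) hS

lemma nearestAnc_of_parent_eq_none (hcard : t.verts.card ≠ 0) {S : Finset ℕ} {z : ℕ}
    (hp : t.parent z = none) : t.nearestAnc S z = none := by
  obtain ⟨f, hf⟩ := Nat.exists_eq_succ_of_ne_zero hcard
  simp [nearestAnc, hf, nearestAncAux, hp]

lemma nearestAnc_of_parent_mem (hcard : t.verts.card ≠ 0) {S : Finset ℕ} {v w : ℕ}
    (hp : t.parent v = some w) (hw : w ∈ S) : t.nearestAnc S v = some w := by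
  obtain ⟨f, hf⟩ := Nat.exists_eq_succ_of_ne_zero hcard
  simp [nearestAnc, hf, nearestAncAux, hp, hw]

lemma lastBefore_of_parent_mem (hcard : t.verts.card ≠ 0) {S : Finset ℕ} {v w : ℕ}
    (hp : t.parent v = some w) (hw : w ∈ S) : t.lastBefore S v = v := by
  obtain ⟨f, hf⟩ := Nat.exists_eq_succ_of_ne_zero hcard
  simp [lastBefore, hf, lastBeforeAux, hp, hw]

end NearestAnc

section IsoMaps

/-- A function `ℕ → ℕ` that restricts to an isomorphism of coloured forests from `s` to `t`;
unlike `IsIsoFn`, it composes and inverts without subtype bookkeeping. -/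
structure IsIsoMap (s t : PForest n) (f : ℕ → ℕ) : Prop where
  bijOn : Set.BijOn f s.verts t.verts
  parent_iff : ∀ v ∈ s.verts, ∀ w ∈ s.verts, s.parent v = some w ↔ t.parent (f v) = some (f w)
  color_eq : ∀ v ∈ s.verts, (s.parent v).isSome → t.color (f v) = s.color v

namespace IsIsoMap

variable {s t r : PForest n} {f g : ℕ → ℕ}

lemma maps (h : IsIsoMap s t f) {v : ℕ} (hv : v ∈ s.verts) : f v ∈ t.verts :=
  h.bijOn.mapsTo hv

lemma injOn (h : IsIsoMap s t f) {v w : ℕ} (hv : v ∈ s.verts) (hw : w ∈ s.verts)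
    (he : f v = f w) : v = w :=
  h.bijOn.injOn hv hw he

lemma parent_some (hs : s.WF) (h : IsIsoMap s t f) {v w : ℕ} (hv : v ∈ s.verts)
    (hp : s.parent v = some w) : t.parent (f v) = some (f w) :=
  (h.parent_iff v hv w (hs.1 _ _ hp).2).mp hp

lemma parent_eq_none (ht : t.WF) (h : IsIsoMap s t f) {z : ℕ} (hz : z ∈ s.verts)
    (hp : s.parent z = none) : t.parent (f z) = none := by
  cases hq : t.parent (f z) with
  | none => rfl
  | some q =>
    obtain ⟨w, hw, rfl⟩ := h.bijOn.surjOn (ht.1 _ _ hq).2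
    simpa [hp] using (h.parent_iff z hz w hw).mpr hq

lemma parent_map (hs : s.WF) (ht : t.WF) (h : IsIsoMap s t f) {z : ℕ} (hz : z ∈ s.verts) :
    t.parent (f z) = (s.parent z).map f := by
  cases hp : s.parent z with
  | none => exact h.parent_eq_none ht hz hp
  | some w => exact h.parent_some hs hz hp

lemma isSome_parent (hs : s.WF) (h : IsIsoMap s t f) {v : ℕ} (hv : v ∈ s.verts)
    (hp : (s.parent v).isSome) : (t.parent (f v)).isSome := by
  obtain ⟨w, hw⟩ := Option.isSome_iff_exists.mp hp
  simp [h.parent_some hs hv hw]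

lemma comp (hs : s.WF) (h1 : IsIsoMap s t f) (h2 : IsIsoMap t r g) : IsIsoMap s r (g ∘ f) where
  bijOn := h2.bijOn.comp h1.bijOn
  parent_iff v hv w hw :=
    (h1.parent_iff v hv w hw).trans (h2.parent_iff _ (h1.maps hv) _ (h1.maps hw))
  color_eq v hv hp :=
    (h2.color_eq _ (h1.maps hv) (h1.isSome_parent hs hv hp)).trans (h1.color_eq v hv hp)

lemma congr (h : IsIsoMap s t f) (he : Set.EqOn f g s.verts) : IsIsoMap s t g where
  bijOn := h.bijOn.congr he
  parent_iff v hv w hw := by rw [← he hv, ← he hw]; exact h.parent_iff v hv w hw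
  color_eq v hv hp := by rw [← he hv]; exact h.color_eq v hv hp

lemma symm (ht : t.WF) (h : IsIsoMap s t f) : IsIsoMap t s (Function.invFunOn f s.verts) := by
  set g := Function.invFunOn f s.verts
  have hinv : Set.InvOn g f s.verts t.verts := h.bijOn.invOn_invFunOn
  have hbij : Set.BijOn g t.verts s.verts := Set.BijOn.symm hinv.symm h.bijOn
  refine ⟨hbij, fun v hv w hw => ?_, fun v hv hp => ?_⟩
  · have hiff := h.parent_iff _ (hbij.mapsTo hv) _ (hbij.mapsTo hw)
    rw [hinv.2 hv, hinv.2 hw] at hiff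
    exact hiff.symm
  · obtain ⟨z, hz⟩ := Option.isSome_iff_exists.mp hp
    have hzm : z ∈ t.verts := (ht.1 _ _ hz).2
    have hsp : s.parent (g v) = some (g z) := by
      rw [h.parent_iff _ (hbij.mapsTo hv) _ (hbij.mapsTo hzm), hinv.2 hv, hinv.2 hzm]
      exact hz
    have hcol := h.color_eq _ (hbij.mapsTo hv) (by rw [hsp]; rfl)
    rw [hinv.2 hv] at hcol
    exact hcol.symm

lemma invFunOn_apply (h : IsIsoMap s t f) {v : ℕ} (hv : v ∈ s.verts) :
    Function.invFunOn f s.verts (f v) = v :=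
  h.bijOn.invOn_invFunOn.1 hv

lemma card_eq (h : IsIsoMap s t f) : s.verts.card = t.verts.card := by
  rw [← Finset.card_image_of_injOn h.bijOn.injOn]
  congr
  exact_mod_cast h.bijOn.image_eq

lemma anc (hs : s.WF) (h : IsIsoMap s t f) {v w : ℕ} (hv : v ∈ s.verts)
    (ha : s.Anc v w) : t.Anc (f v) (f w) := by
  induction ha with
  | refl => exact Relation.ReflTransGen.refl
  | tail h1 h2 ih =>
    have hb : _ ∈ s.verts := (eq_or_anc_parent h1).elim (· ▸ hv) fun _ => (hs.1 _ _ h2).1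
    exact Relation.ReflTransGen.tail ih (h.parent_some hs hb h2)

lemma anc_iff (hs : s.WF) (ht : t.WF) (h : IsIsoMap s t f) {v w : ℕ}
    (hv : v ∈ s.verts) (hw : w ∈ s.verts) : s.Anc v w ↔ t.Anc (f v) (f w) := by
  refine ⟨h.anc hs hv, fun ha => ?_⟩
  have := (h.symm ht).anc ht (h.maps hv) ha
  rwa [h.invFunOn_apply hv, h.invFunOn_apply hw] at this

lemma root_eq (hs1 : s.IsTree) (ht : t.WF) (ht1 : t.IsTree) (h : IsIsoMap s t f) :
    f (root s) = root t :=
  eq_root ht1 (h.maps (root_mem hs1)) (h.parent_eq_none ht (root_mem hs1) (parent_root hs1))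

end IsIsoMap

variable {s t : PForest n} {f : ℕ → ℕ}

lemma isIsoMap_id (t : PForest n) : IsIsoMap t t id :=
  ⟨Set.bijOn_id _, fun _ _ _ _ => Iff.rfl, fun _ _ _ => rfl⟩

lemma isIsoMap_of_parent_map (hs : s.WF) (hbij : Set.BijOn f s.verts t.verts)
    (hpar : ∀ z ∈ s.verts, t.parent (f z) = (s.parent z).map f)
    (hcol : ∀ z ∈ s.verts, (s.parent z).isSome → t.color (f z) = s.color z) :
    IsIsoMap s t f := by
  refine ⟨hbij, fun z hz w hw => ?_, hcol⟩
  rw [hpar z hz]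
  constructor
  · intro h; rw [h]; rfl
  · intro h
    obtain ⟨w', hw', hfw⟩ := Option.map_eq_some_iff.mp h
    rw [hw', hbij.injOn (hs.1 _ _ hw').2 hw hfw]

lemma isIsoMap_id_of_eq (hverts : s.verts = t.verts)
    (hpar : ∀ z ∈ s.verts, s.parent z = t.parent z)
    (hcol : ∀ z ∈ s.verts, (s.parent z).isSome → t.color z = s.color z) : IsIsoMap s t id :=
  ⟨hverts ▸ Set.bijOn_id _, fun z hz w _ => by rw [hpar z hz]; rfl, hcol⟩

def IsIsoMap.equiv (h : IsIsoMap s t f) : {x // x ∈ s.verts} ≃ {x // x ∈ t.verts} :=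
  Equiv.ofBijective (fun x => ⟨f x, h.maps x.2⟩)
    ⟨fun a b hab => Subtype.ext (h.injOn a.2 b.2 (congrArg Subtype.val hab)), fun y => by
      obtain ⟨x, hx, hxy⟩ := h.bijOn.surjOn y.2
      exact ⟨⟨x, hx⟩, Subtype.ext hxy⟩⟩

lemma IsIsoMap.isIsoFn_equiv (h : IsIsoMap s t f) : IsIsoFn s t h.equiv :=
  ⟨fun a b => h.parent_iff a a.2 b b.2, fun a hp => h.color_eq a a.2 hp⟩

lemma IsIsoMap.piso (h : IsIsoMap s t f) : PIso s t := ⟨h.equiv, h.isIsoFn_equiv⟩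

def equivFn (e : {x // x ∈ s.verts} ≃ {x // x ∈ t.verts}) : ℕ → ℕ :=
  fun x => if hx : x ∈ s.verts then e ⟨x, hx⟩ else x

lemma equivFn_apply {e : {x // x ∈ s.verts} ≃ {x // x ∈ t.verts}} {x : ℕ} (hx : x ∈ s.verts) :
    equivFn e x = e ⟨x, hx⟩ := dif_pos hx

lemma IsIsoFn.isIsoMap {e : {x // x ∈ s.verts} ≃ {x // x ∈ t.verts}} (he : IsIsoFn s t e) :
    IsIsoMap s t (equivFn e) := by
  refine ⟨⟨fun x hx => ?_, fun a ha b hb hab => ?_, fun y hy => ?_⟩, fun a ha b hb => ?_,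
    fun a ha hp => ?_⟩
  · rw [equivFn_apply hx]; exact (e _).2
  · rw [equivFn_apply ha, equivFn_apply hb] at hab
    exact congrArg Subtype.val (e.injective (Subtype.ext hab))
  · refine ⟨e.symm ⟨y, hy⟩, (e.symm ⟨y, hy⟩).2, ?_⟩
    rw [equivFn_apply (e.symm ⟨y, hy⟩).2]
    simp
  · rw [equivFn_apply ha, equivFn_apply hb]; exact he.1 ⟨a, ha⟩ ⟨b, hb⟩
  · rw [equivFn_apply ha]; exact he.2 ⟨a, ha⟩ hp

lemma isIsoFn_iff_isIsoMap {e : {x // x ∈ s.verts} ≃ {x // x ∈ t.verts}} :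
    IsIsoFn s t e ↔ IsIsoMap s t (equivFn e) := by
  refine ⟨IsIsoFn.isIsoMap, fun h => ⟨fun a b => ?_, fun a hp => ?_⟩⟩
  · have := h.parent_iff a a.2 b b.2
    rwa [equivFn_apply a.2, equivFn_apply b.2] at this
  · have := h.color_eq a a.2 hp
    rwa [equivFn_apply a.2] at this

lemma PIso.exists_isIsoMap (h : PIso s t) : ∃ f, IsIsoMap s t f :=
  let ⟨_, he⟩ := h; ⟨_, he.isIsoMap⟩

end IsoMaps

section AboveSet

variable {t : PForest n}

lemma mem_aboveSet {x z : ℕ} : z ∈ t.aboveSet x ↔ z ∈ t.verts ∧ t.Anc z x := by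
  simp [aboveSet]

lemma self_mem_aboveSet {x : ℕ} (hx : x ∈ t.verts) : x ∈ t.aboveSet x :=
  mem_aboveSet.mpr ⟨hx, Relation.ReflTransGen.refl⟩

lemma aboveSet_subset {x : ℕ} : t.aboveSet x ⊆ t.verts :=
  Finset.filter_subset _ _

lemma mem_aboveSet_of_anc {x z w : ℕ} (hz : z ∈ t.aboveSet x) (hw : t.Anc w z)
    (hwm : w ∈ t.verts) : w ∈ t.aboveSet x :=
  mem_aboveSet.mpr ⟨hwm, hw.trans (mem_aboveSet.mp hz).2⟩

lemma exists_parent_of_mem_aboveSet (ht : t.WF) {a z : ℕ} (hz : z ∈ t.aboveSet a)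
    (hne : z ≠ a) : ∃ w, t.parent z = some w ∧ w ∈ t.aboveSet a := by
  obtain h | ⟨c, hc, h2⟩ := eq_or_anc_parent (mem_aboveSet.mp hz).2
  · exact absurd h hne
  · exact ⟨c, hc, mem_aboveSet.mpr ⟨(ht.1 _ _ hc).2, h2⟩⟩

lemma parent_not_mem_aboveSet (ht : t.WF) {x w : ℕ} (hp : t.parent x = some w) :
    w ∉ t.aboveSet x :=
  fun h => not_anc_of_parent ht hp (mem_aboveSet.mp h).2

lemma parent_not_mem_aboveSet_of_not_mem {b z w : ℕ} (hz : z ∉ t.aboveSet b)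
    (hzv : z ∈ t.verts) (hp : t.parent z = some w) : w ∉ t.aboveSet b :=
  fun hw => hz (mem_aboveSet_of_anc hw (anc_of_parent hp) hzv)

lemma not_mem_aboveSet_of_sibling (ht : t.WF) {b b' ρ z : ℕ} (hb : t.parent b = some ρ)
    (hb' : t.parent b' = some ρ) (hne : b ≠ b') (h : z ∈ t.aboveSet b) : z ∉ t.aboveSet b' :=
  fun h' => hne (eq_of_anc_of_parent_eq ht (mem_aboveSet.mp h).2 (mem_aboveSet.mp h').2 hb hb')

lemma root_not_mem_aboveSet (ht1 : t.IsTree) {a : ℕ} (hna : a ≠ root t) :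
    root t ∉ t.aboveSet a :=
  fun h => hna (eq_root_of_root_anc ht1 (mem_aboveSet.mp h).2)

lemma card_aboveSet_lt (ht1 : t.IsTree) {a : ℕ} (hna : a ≠ root t) :
    (t.aboveSet a).card < t.verts.card :=
  Finset.card_lt_card (Finset.ssubset_iff_subset_ne.mpr ⟨aboveSet_subset,
    fun h => root_not_mem_aboveSet ht1 hna (h ▸ root_mem ht1)⟩)

end AboveSet

section BranchPrune

variable {t : PForest n}

def branch (t : PForest n) (a : ℕ) : PForest n where
  verts := t.aboveSet a
  parent := fun z => if z ∈ t.aboveSet a ∧ z ≠ a then t.parent z else none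
  color := t.color

def prune (t : PForest n) (a : ℕ) : PForest n where
  verts := t.verts \ t.aboveSet a
  parent := fun z => if z ∈ t.verts \ t.aboveSet a then t.parent z else none
  color := t.color

variable {a z : ℕ}

lemma branch_parent_of_ne (hz : z ∈ t.aboveSet a) (hne : z ≠ a) :
    (branch t a).parent z = t.parent z :=
  if_pos ⟨hz, hne⟩

lemma branch_parent_self : (branch t a).parent a = none :=
  if_neg fun h => h.2 rfl

lemma mem_prune : z ∈ (prune t a).verts ↔ z ∈ t.verts ∧ z ∉ t.aboveSet a :=
  Finset.mem_sdiff

lemma prune_parent (hz : z ∈ (prune t a).verts) : (prune t a).parent z = t.parent z :=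
  if_pos hz

lemma branch_wf (ht : t.WF) : (branch t a).WF := by
  obtain ⟨hm, rk, hrk⟩ := ht
  refine ⟨fun z w hp => ?_, rk, fun z w hp => ?_⟩ <;> change (if _ then _ else _) = _ at hp <;>
    split_ifs at hp with hz
  · obtain ⟨w', hw', hw'A⟩ := exists_parent_of_mem_aboveSet ⟨hm, rk, hrk⟩ hz.1 hz.2
    exact ⟨hz.1, Option.some_injective _ (hp.symm.trans hw') ▸ hw'A⟩
  · exact hrk _ _ hp

lemma branch_isTree (ht : t.WF) (ha : a ∈ t.verts) : (branch t a).IsTree := by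
  have hfil : ((branch t a).verts.filter fun z => (branch t a).parent z = none) = {a} := by
    ext z
    simp only [Finset.mem_filter, Finset.mem_singleton]
    constructor
    · rintro ⟨hz, hpz⟩
      by_contra hza
      obtain ⟨w, hw, -⟩ := exists_parent_of_mem_aboveSet ht hz hza
      simp [branch_parent_of_ne hz hza, hw] at hpz
    · rintro rfl
      exact ⟨self_mem_aboveSet ha, branch_parent_self⟩
  rw [IsTree, hfil, Finset.card_singleton]

lemma branch_root (ht : t.WF) (ha : a ∈ t.verts) : root (branch t a) = a :=
  (eq_root (branch_isTree ht ha) (self_mem_aboveSet ha) branch_parent_self).symm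

lemma prune_wf (ht : t.WF) : (prune t a).WF := by
  obtain ⟨hm, rk, hrk⟩ := ht
  refine ⟨fun z w hp => ?_, rk, fun z w hp => ?_⟩ <;> change (if _ then _ else _) = _ at hp <;>
    split_ifs at hp with hz
  · have hz' := Finset.mem_sdiff.mp hz
    exact ⟨hz, Finset.mem_sdiff.mpr ⟨(hm _ _ hp).2,
      parent_not_mem_aboveSet_of_not_mem hz'.2 hz'.1 hp⟩⟩
  · exact hrk _ _ hp

lemma prune_isTree (ht1 : t.IsTree) (hna : a ≠ root t) : (prune t a).IsTree := by
  have hr : root t ∈ (prune t a).verts :=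
    mem_prune.mpr ⟨root_mem ht1, root_not_mem_aboveSet ht1 hna⟩
  have hfil : ((prune t a).verts.filter fun z => (prune t a).parent z = none) = {root t} := by
    ext z
    simp only [Finset.mem_filter, Finset.mem_singleton]
    constructor
    · rintro ⟨hz, hpz⟩
      exact eq_root ht1 (mem_prune.mp hz).1 (prune_parent hz ▸ hpz)
    · rintro rfl
      exact ⟨hr, (prune_parent hr).trans (parent_root ht1)⟩
  rw [IsTree, hfil, Finset.card_singleton]

lemma card_prune : (prune t a).verts.card = t.verts.card - (t.aboveSet a).card :=
  Finset.card_sdiff_of_subset aboveSet_subset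

end BranchPrune

section BranchIsos

variable {s t t' : PForest n} {f : ℕ → ℕ}

namespace IsIsoMap

lemma image_aboveSet (hs : s.WF) (ht : t.WF) (h : IsIsoMap s t f) {x : ℕ}
    (hx : x ∈ s.verts) : (s.aboveSet x).image f = t.aboveSet (f x) := by
  ext z
  simp only [Finset.mem_image, mem_aboveSet]
  constructor
  · rintro ⟨y, ⟨hy, hyx⟩, rfl⟩
    exact ⟨h.maps hy, h.anc hs hy hyx⟩
  · rintro ⟨hz, hzx⟩
    obtain ⟨y, hy, rfl⟩ := h.bijOn.surjOn hz
    exact ⟨y, ⟨hy, (h.anc_iff hs ht hy hx).mpr hzx⟩, rfl⟩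

lemma restrict_branch (ht : t.WF) (ht' : t'.WF) (h : IsIsoMap t t' f) {x : ℕ} (hx : x ∈ t.verts) :
    IsIsoMap (branch t x) (branch t' (f x)) f := by
  have himg := h.image_aboveSet ht ht' hx
  refine isIsoMap_of_parent_map (branch_wf ht) ?_ (fun z hz => ?_) (fun z hz hp => h.color_eq z
    (aboveSet_subset hz) ?_)
  · have := (h.bijOn.subset_left (Finset.coe_subset.mpr (aboveSet_subset (x := x))))
    rwa [← Finset.coe_image, himg] at this
  · have hfz : f z ∈ t'.aboveSet (f x) := himg ▸ Finset.mem_image_of_mem f hz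
    by_cases hzx : z = x
    · subst hzx
      rw [branch_parent_self, branch_parent_self]
      rfl
    · have hne : f z ≠ f x := fun e => hzx (h.injOn (aboveSet_subset hz) hx e)
      rw [branch_parent_of_ne hz hzx, branch_parent_of_ne hfz hne,
        h.parent_map ht ht' (aboveSet_subset hz)]
  · by_cases hzx : z = x
    · subst hzx; simp [branch_parent_self] at hp
    · rwa [← branch_parent_of_ne hz hzx]

lemma restrict_prune (ht : t.WF) (ht' : t'.WF) (h : IsIsoMap t t' f) {x : ℕ} (hx : x ∈ t.verts) :
    IsIsoMap (prune t x) (prune t' (f x)) f := by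
  have himg := h.image_aboveSet ht ht' hx
  have hbij : Set.BijOn f (prune t x).verts (prune t' (f x)).verts := by
    simp only [prune, Finset.coe_sdiff]
    refine h.bijOn.sdiff_of_image_eq (Finset.coe_subset.mpr aboveSet_subset) ?_
    rw [← Finset.coe_image, himg]
  refine isIsoMap_of_parent_map (prune_wf ht) hbij (fun z hz => ?_) (fun z hz hp => ?_)
  · rw [prune_parent hz, prune_parent (hbij.mapsTo hz), h.parent_map ht ht' (mem_prune.mp hz).1]
  · rw [prune_parent hz] at hp
    exact h.color_eq z (mem_prune.mp hz).1 hp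

end IsIsoMap

end BranchIsos

section Gluing

variable {t t' : PForest n} {a a' : ℕ} {M R : ℕ → ℕ}

lemma IsIsoMap.branch_root_eq (ht : t.WF) (ht' : t'.WF) (ha : a ∈ t.verts) (ha' : a' ∈ t'.verts)
    (hM : IsIsoMap (branch t a) (branch t' a') M) : M a = a' := by
  simpa [branch_root ht ha, branch_root ht' ha'] using
    hM.root_eq (branch_isTree ht ha) (branch_wf ht') (branch_isTree ht' ha')

lemma IsIsoMap.parent_map_of_branch (ht : t.WF) (ht' : t'.WF) (ha : a ∈ t.verts)
    (ha' : a' ∈ t'.verts) (hM : IsIsoMap (branch t a) (branch t' a') M) {z : ℕ}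
    (hz : z ∈ t.aboveSet a) (hza : z ≠ a) : t'.parent (M z) = (t.parent z).map M := by
  have hMz : M z ≠ a' := fun e => hza (hM.injOn hz (self_mem_aboveSet ha)
    (e.trans (hM.branch_root_eq ht ht' ha ha').symm))
  rw [← branch_parent_of_ne (hM.maps hz) hMz, hM.parent_map (branch_wf ht) (branch_wf ht') hz,
    branch_parent_of_ne hz hza]

lemma IsIsoMap.color_of_branch (hM : IsIsoMap (branch t a) (branch t' a') M) {z : ℕ}
    (hz : z ∈ t.aboveSet a) (hza : z ≠ a) (hp : (t.parent z).isSome) :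
    t'.color (M z) = t.color z :=
  hM.color_eq z hz (by rwa [branch_parent_of_ne hz hza])

lemma IsIsoMap.parent_map_of_prune (ht : t.WF) (ht' : t'.WF)
    (hR : IsIsoMap (prune t a) (prune t' a') R) {z : ℕ} (hz : z ∈ (prune t a).verts) :
    t'.parent (R z) = (t.parent z).map R := by
  rw [← prune_parent (hR.maps hz), hR.parent_map (prune_wf ht) (prune_wf ht') hz, prune_parent hz]

lemma IsIsoMap.color_of_prune (hR : IsIsoMap (prune t a) (prune t' a') R) {z : ℕ}
    (hz : z ∈ (prune t a).verts) (hp : (t.parent z).isSome) : t'.color (R z) = t.color z :=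
  hR.color_eq z hz (by rwa [prune_parent hz])

theorem IsIsoMap.glue (ht : t.WF) (ht' : t'.WF) {y y' : ℕ} (hpa : t.parent a = some y)
    (hpa' : t'.parent a' = some y') (hM : IsIsoMap (branch t a) (branch t' a') M)
    (hR : IsIsoMap (prune t a) (prune t' a') R) (hRy : R y = y')
    (hcol : t'.color a' = t.color a) :
    IsIsoMap t t' (fun z => if z ∈ t.aboveSet a then M z else R z) := by
  have ha := (ht.1 _ _ hpa).1
  have ha' := (ht'.1 _ _ hpa').1
  have hMa := hM.branch_root_eq ht ht' ha ha'
  refine isIsoMap_of_parent_map ht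
    (Finset.bijOn_ite aboveSet_subset aboveSet_subset hM.bijOn hR.bijOn)
    (fun z hz => ?_) (fun z hz hp => ?_)
  · by_cases hzA : z ∈ t.aboveSet a
    · by_cases hza : z = a
      · subst hza
        simp [hzA, hMa, hpa, hpa', parent_not_mem_aboveSet ht hpa, hRy]
      · obtain ⟨w, hw, hwA⟩ := exists_parent_of_mem_aboveSet ht hzA hza
        simp [hzA, hM.parent_map_of_branch ht ht' ha ha' hzA hza, hw, hwA]
    · have hz' : z ∈ (prune t a).verts := mem_prune.mpr ⟨hz, hzA⟩
      cases hp : t.parent z with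
      | none => simp [hzA, hR.parent_map_of_prune ht ht' hz', hp]
      | some w =>
        simp [hzA, hR.parent_map_of_prune ht ht' hz', hp,
          parent_not_mem_aboveSet_of_not_mem hzA hz hp]
  · by_cases hzA : z ∈ t.aboveSet a
    · by_cases hza : z = a
      · subst hza
        simp [hzA, hMa, hcol]
      · simp [hzA, hM.color_of_branch hzA hza hp]
    · simp [hzA, hR.color_of_prune (mem_prune.mpr ⟨hz, hzA⟩) hp]

end Gluing

section Swapping

variable {t : PForest n}

theorem IsIsoMap.swap_siblings (ht : t.WF) {b b' ρ : ℕ} (hb : t.parent b = some ρ)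
    (hb' : t.parent b' = some ρ) (hne : b ≠ b') {M : ℕ → ℕ}
    (hM : IsIsoMap (branch t b) (branch t b') M) (hcol : t.color b' = t.color b) :
    IsIsoMap t t (fun z => if z ∈ t.aboveSet b then M z
      else if z ∈ t.aboveSet b' then Function.invFunOn M (t.aboveSet b) z else z) := by
  set N := Function.invFunOn M (t.aboveSet b)
  have hN : IsIsoMap (branch t b') (branch t b) N := hM.symm (branch_wf ht)
  have hbm := (ht.1 _ _ hb).1
  have hbm' := (ht.1 _ _ hb').1
  have hMb := hM.branch_root_eq ht ht hbm hbm'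
  have hNb := hN.branch_root_eq ht ht hbm' hbm
  have hdisj' : ∀ {z}, z ∈ t.aboveSet b' → z ∉ t.aboveSet b :=
    not_mem_aboveSet_of_sibling ht hb' hb hne.symm
  have hρ : ρ ∉ t.aboveSet b := parent_not_mem_aboveSet ht hb
  have hρ' : ρ ∉ t.aboveSet b' := parent_not_mem_aboveSet ht hb'
  have hbij := Finset.bijOn_swap aboveSet_subset aboveSet_subset
    (Finset.disjoint_left.mpr fun _ => not_mem_aboveSet_of_sibling ht hb hb' hne) hM.bijOn
  refine isIsoMap_of_parent_map ht hbij (fun z hz => ?_) (fun z hz hp => ?_)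
  · by_cases h1 : z ∈ t.aboveSet b
    · by_cases hzb : z = b
      · subst hzb
        simp [h1, hMb, hb, hb', hρ, hρ']
      · obtain ⟨w, hw, hwA⟩ := exists_parent_of_mem_aboveSet ht h1 hzb
        simp [h1, hM.parent_map_of_branch ht ht hbm hbm' h1 hzb, hw, hwA]
    · by_cases h2 : z ∈ t.aboveSet b'
      · by_cases hzb : z = b'
        · subst hzb
          simp [h1, h2, hNb, hb, hb', hρ, hρ']
        · obtain ⟨w, hw, hwA⟩ := exists_parent_of_mem_aboveSet ht h2 hzb
          simp [h1, h2, hN.parent_map_of_branch ht ht hbm' hbm h2 hzb, hw, hwA, hdisj' hwA]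
      · cases hp : t.parent z with
        | none => simp [h1, h2, hp]
        | some w =>
          simp [h1, h2, hp, parent_not_mem_aboveSet_of_not_mem h1 hz hp,
            parent_not_mem_aboveSet_of_not_mem h2 hz hp]
  · by_cases h1 : z ∈ t.aboveSet b
    · by_cases hzb : z = b
      · subst hzb
        simp [h1, hMb, hcol]
      · simp [h1, hM.color_of_branch h1 hzb hp]
    · by_cases h2 : z ∈ t.aboveSet b'
      · by_cases hzb : z = b'
        · subst hzb
          simp [h1, h2, hNb, hcol]
        · simp [h1, h2, hN.color_of_branch h2 hzb hp]
      · simp [h1, h2]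

theorem exists_isIsoMap_swap (ht : t.WF) (ht1 : t.IsTree) {v w : ℕ}
    {h : ℕ → ℕ} (hh : IsIsoMap t t h) (hv : v ∈ t.verts) (hhv : h v = w) :
    ∃ k, IsIsoMap t t k ∧ k v = w ∧ k w = v := by
  induction hN : t.verts.card using Nat.strong_induction_on generalizing t v w h with
  | _ N ih =>
  by_cases hvw : v = w
  · exact ⟨id, isIsoMap_id t, hvw, hvw.symm⟩
  have hroot := hh.root_eq ht1 ht ht1
  have hvr : v ≠ root t := by rintro rfl; exact hvw (hhv ▸ hroot).symm
  have hw : w ∈ t.verts := hhv ▸ hh.maps hv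
  have hwr : w ≠ root t := by
    rintro rfl
    exact hvw (hh.injOn hv (root_mem ht1) (hhv.trans hroot.symm))
  obtain ⟨b, hvb, hb⟩ := exists_anc_parent_eq (anc_root ht ht1 hv) hvr
  obtain ⟨b', hwb', hb'⟩ := exists_anc_parent_eq (anc_root ht ht1 hw) hwr
  have hbm := (ht.1 _ _ hb).1
  have hvA : v ∈ t.aboveSet b := mem_aboveSet.mpr ⟨hv, hvb⟩
  have hwA : w ∈ t.aboveSet b' := mem_aboveSet.mpr ⟨hw, hwb'⟩
  have hhb : h b = b' := by
    refine eq_of_anc_of_parent_eq ht (hhv ▸ hh.anc ht hv hvb) hwb' ?_ hb'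
    rw [hh.parent_some ht hbm hb, hroot]
  have hM : IsIsoMap (branch t b) (branch t b') h := hhb ▸ hh.restrict_branch ht ht hbm
  by_cases hbb : b = b'
  · subst hbb
    have hbr : b ≠ root t := fun e => by simp [e, parent_root ht1] at hb
    obtain ⟨k, hk, hkv, hkw⟩ := ih _ (hN ▸ card_aboveSet_lt ht1 hbr) (branch_wf ht)
      (branch_isTree ht hbm) hM hvA hhv rfl
    refine ⟨_, hk.glue ht ht hb hb (isIsoMap_id _) rfl rfl, ?_, ?_⟩ <;> simp [hvA, hwA, hkv, hkw]
  · refine ⟨_, hM.swap_siblings ht hb hb' hbb (hhb ▸ hh.color_eq b hbm (by simp [hb])), ?_, ?_⟩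
    · simp [hvA, hhv]
    · simp only [if_neg (not_mem_aboveSet_of_sibling ht hb' hb (Ne.symm hbb) hwA), if_pos hwA]
      rw [← hhv]
      exact hM.invFunOn_apply hvA

end Swapping

section Graft

variable {s t : PForest n} {v : ℕ} {p : Fin n}

lemma two_mul_add_one_div_two (b : ℕ) : (2*b+1)/2 = b := by omega

lemma mem_graft {x : ℕ} :
    x ∈ (graft s t v p).verts ↔ (∃ a ∈ t.verts, x = 2*a) ∨ (∃ b ∈ s.verts, x = 2*b+1) := by
  simp only [graft, Finset.mem_union, Finset.mem_image]
  exact or_congr (exists_congr fun a => and_congr_right fun _ => eq_comm)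
    (exists_congr fun b => and_congr_right fun _ => eq_comm)

lemma even_mem_graft {a : ℕ} : 2*a ∈ (graft s t v p).verts ↔ a ∈ t.verts := by
  rw [mem_graft]
  constructor
  · rintro (⟨a', ha', e⟩ | ⟨b, -, e⟩)
    · exact (show a = a' by omega) ▸ ha'
    · omega
  · exact fun ha => Or.inl ⟨a, ha, rfl⟩

lemma odd_mem_graft {b : ℕ} : 2*b+1 ∈ (graft s t v p).verts ↔ b ∈ s.verts := by
  rw [mem_graft]
  constructor
  · rintro (⟨a, -, e⟩ | ⟨b', hb', e⟩)
    · omega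
    · exact (show b = b' by omega) ▸ hb'
  · exact fun hb => Or.inr ⟨b, hb, rfl⟩

lemma graft_parent_even (a : ℕ) :
    (graft s t v p).parent (2*a) = (t.parent a).map (2 * ·) := by
  simp [graft]

lemma graft_parent_odd_of_parent {b c : ℕ} (h : s.parent b = some c) :
    (graft s t v p).parent (2*b+1) = some (2*c+1) := by
  simp [graft, two_mul_add_one_div_two, h]

lemma graft_parent_odd_root (hs1 : s.IsTree) :
    (graft s t v p).parent (2*root s+1) = some (2*v) := by
  simp [graft, two_mul_add_one_div_two, parent_root hs1, root_mem hs1]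

lemma graft_color_even (a : ℕ) : (graft s t v p).color (2*a) = t.color a := by
  simp [graft]

lemma graft_color_odd_of_parent {b c : ℕ} (h : s.parent b = some c) :
    (graft s t v p).color (2*b+1) = s.color b := by
  simp [graft, two_mul_add_one_div_two, h]

lemma graft_color_odd_root (hs1 : s.IsTree) : (graft s t v p).color (2*root s+1) = p := by
  simp [graft, two_mul_add_one_div_two, parent_root hs1]

lemma graft_parent_eq_some {x y : ℕ} (h : (graft s t v p).parent x = some y) :
    (∃ a c, x = 2*a ∧ y = 2*c ∧ t.parent a = some c) ∨
    (∃ b c, x = 2*b+1 ∧ y = 2*c+1 ∧ s.parent b = some c) ∨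
    (∃ b, x = 2*b+1 ∧ y = 2*v ∧ b ∈ s.verts) := by
  obtain ⟨k, rfl | rfl⟩ := Nat.even_or_odd' x
  · rw [graft_parent_even] at h
    obtain ⟨c, hc, rfl⟩ := Option.map_eq_some_iff.mp h
    exact Or.inl ⟨k, c, rfl, rfl, hc⟩
  · cases hb : s.parent k with
    | some c =>
      rw [graft_parent_odd_of_parent hb] at h
      exact Or.inr (Or.inl ⟨k, c, rfl, (Option.some_injective _ h).symm, hb⟩)
    | none =>
      simp only [graft, two_mul_add_one_div_two, hb] at h
      split_ifs at h with h1 h2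
      · omega
      · exact Or.inr (Or.inr ⟨k, rfl, (Option.some_injective _ h).symm, h2⟩)

lemma graft_wf (hs : s.WF) (ht : t.WF) (hv : v ∈ t.verts) : (graft s t v p).WF := by
  obtain ⟨hsm, rks, hrks⟩ := hs
  obtain ⟨htm, rkt, hrkt⟩ := ht
  refine ⟨fun x y h => ?_, fun x => if x % 2 = 0 then rkt (x/2) else rks (x/2) + rkt v + 1,
    fun x y h => ?_⟩ <;>
  rcases graft_parent_eq_some h with ⟨a, c, rfl, rfl, hc⟩ | ⟨b, c, rfl, rfl, hc⟩ | ⟨b, rfl, rfl, hb⟩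
  · exact ⟨even_mem_graft.mpr (htm _ _ hc).1, even_mem_graft.mpr (htm _ _ hc).2⟩
  · exact ⟨odd_mem_graft.mpr (hsm _ _ hc).1, odd_mem_graft.mpr (hsm _ _ hc).2⟩
  · exact ⟨odd_mem_graft.mpr hb, even_mem_graft.mpr hv⟩
  · simpa using hrkt _ _ hc
  · simpa [two_mul_add_one_div_two] using hrks _ _ hc
  · simp [two_mul_add_one_div_two]

lemma graft_anc_even {a x : ℕ} (h : (graft s t v p).Anc (2*a) x) :
    ∃ a', x = 2*a' ∧ t.Anc a a' := by
  induction h with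
  | refl => exact ⟨a, rfl, Relation.ReflTransGen.refl⟩
  | tail _ h2 ih =>
    obtain ⟨a', rfl, ha'⟩ := ih
    rcases graft_parent_eq_some h2 with ⟨a'', c, e, rfl, hc⟩ | ⟨_, _, e, -⟩ | ⟨_, e, -⟩
    · cases show a' = a'' by omega
      exact ⟨c, rfl, ha'.tail hc⟩
    all_goals omega

lemma graft_anc_odd {b x : ℕ} (h : (graft s t v p).Anc (2*b+1) x) :
    (∃ b', x = 2*b'+1 ∧ s.Anc b b') ∨ (∃ a, x = 2*a ∧ t.Anc v a) := by
  induction h with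
  | refl => exact Or.inl ⟨b, rfl, Relation.ReflTransGen.refl⟩
  | tail _ h2 ih =>
    rcases ih with ⟨b', rfl, hb'⟩ | ⟨a, rfl, ha⟩ <;>
    rcases graft_parent_eq_some h2 with ⟨a', c, e, rfl, hc⟩ | ⟨b'', c, e, rfl, hc⟩ | ⟨_, e, rfl, -⟩
    · omega
    · cases show b' = b'' by omega
      exact Or.inl ⟨c, rfl, hb'.tail hc⟩
    · exact Or.inr ⟨v, rfl, Relation.ReflTransGen.refl⟩
    · cases show a = a' by omega
      exact Or.inr ⟨c, rfl, ha.tail hc⟩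
    all_goals omega

lemma graft_anc_even_of_anc {a a' : ℕ} (h : t.Anc a a') :
    (graft s t v p).Anc (2*a) (2*a') := by
  induction h with
  | refl => exact Relation.ReflTransGen.refl
  | tail _ h2 ih =>
    exact ih.tail (show (graft s t v p).parent _ = _ by
      rw [graft_parent_even, (h2 : t.parent _ = _)]; rfl)

lemma graft_anc_odd_of_anc {b b' : ℕ} (h : s.Anc b b') :
    (graft s t v p).Anc (2*b+1) (2*b'+1) := by
  induction h with
  | refl => exact Relation.ReflTransGen.refl
  | tail _ h2 ih => exact ih.tail (graft_parent_odd_of_parent h2)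

lemma graft_anc_odd_even (hs : s.WF) (hs1 : s.IsTree) {b a : ℕ} (hb : b ∈ s.verts)
    (h : t.Anc v a) : (graft s t v p).Anc (2*b+1) (2*a) :=
  (graft_anc_odd_of_anc (anc_root hs hs1 hb)).trans
    (anc_head (graft_parent_odd_root hs1) (graft_anc_even_of_anc h))

lemma graft_aboveSet_top (hs : s.WF) (hs1 : s.IsTree) :
    (graft s t v p).aboveSet (2*root s+1) = s.verts.image (2 * · + 1) := by
  ext z
  simp only [mem_aboveSet, Finset.mem_image]
  constructor
  · rintro ⟨hz, hanc⟩
    rcases mem_graft.mp hz with ⟨a, -, rfl⟩ | ⟨b, hb, rfl⟩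
    · obtain ⟨a', e, -⟩ := graft_anc_even hanc
      omega
    · exact ⟨b, hb, rfl⟩
  · rintro ⟨b, hb, rfl⟩
    exact ⟨odd_mem_graft.mpr hb, graft_anc_odd_of_anc (anc_root hs hs1 hb)⟩

lemma graft_aboveSet_odd {b : ℕ} :
    (graft s t v p).aboveSet (2*b+1) = (s.aboveSet b).image (2 * · + 1) := by
  ext z
  simp only [mem_aboveSet, Finset.mem_image]
  constructor
  · rintro ⟨hz, hanc⟩
    rcases mem_graft.mp hz with ⟨a, -, rfl⟩ | ⟨c, hc, rfl⟩
    · obtain ⟨a', e, -⟩ := graft_anc_even hanc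
      omega
    · rcases graft_anc_odd hanc with ⟨b', e, hb'⟩ | ⟨a, e, -⟩
      · cases show b' = b by omega
        exact ⟨c, ⟨hc, hb'⟩, rfl⟩
      · omega
  · rintro ⟨c, hc, rfl⟩
    exact ⟨odd_mem_graft.mpr hc.1, graft_anc_odd_of_anc hc.2⟩

lemma graft_aboveSet_even {a : ℕ} (hva : ¬ t.Anc v a) :
    (graft s t v p).aboveSet (2*a) = (t.aboveSet a).image (2 * ·) := by
  ext z
  simp only [mem_aboveSet, Finset.mem_image]
  constructor
  · rintro ⟨hz, hanc⟩
    rcases mem_graft.mp hz with ⟨c, hc, rfl⟩ | ⟨b, -, rfl⟩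
    · obtain ⟨a', e, h'⟩ := graft_anc_even hanc
      cases show a' = a by omega
      exact ⟨c, ⟨hc, h'⟩, rfl⟩
    · rcases graft_anc_odd hanc with ⟨b', e, -⟩ | ⟨a', e, h'⟩
      · omega
      · exact absurd ((show a' = a by omega) ▸ h') hva
  · rintro ⟨c, hc, rfl⟩
    exact ⟨even_mem_graft.mpr hc.1, graft_anc_even_of_anc hc.2⟩

end Graft

section GraftIsos

variable {s s' t t' : PForest n} {v v' : ℕ} {p q : Fin n} {Φ : ℕ → ℕ}

lemma isIsoMap_branch_graft_top (hs : s.WF) (hs1 : s.IsTree) :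
    IsIsoMap s (branch (graft s t v p) (2*root s+1)) (2 * · + 1) := by
  have hA := graft_aboveSet_top (t := t) (v := v) (p := p) hs hs1
  have hmem : ∀ {b}, b ∈ s.verts → 2*b+1 ∈ (graft s t v p).aboveSet (2*root s+1) :=
    fun hb => hA ▸ Finset.mem_image_of_mem _ hb
  refine isIsoMap_of_parent_map hs ?_ (fun b hb => ?_) (fun b hb hp => ?_)
  · rw [show (branch (graft s t v p) (2*root s+1)).verts = _ from hA]
    exact Finset.bijOn_image_of_injective (fun x y h => by simpa using h) _
  · by_cases hbr : b = root s
    · subst hbr; simp [branch_parent_self, parent_root hs1]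
    · obtain ⟨c, hc⟩ := Option.ne_none_iff_exists'.mp fun h => hbr (eq_root hs1 hb h)
      rw [branch_parent_of_ne (hmem hb) (by omega), graft_parent_odd_of_parent hc, hc]; rfl
  · obtain ⟨c, hc⟩ := Option.isSome_iff_exists.mp hp
    exact graft_color_odd_of_parent (t := t) (v := v) hc

lemma isIsoMap_prune_graft_top (hs : s.WF) (hs1 : s.IsTree) :
    IsIsoMap t (prune (graft s t v p) (2*root s+1)) (2 * ·) := by
  have hverts : (prune (graft s t v p) (2*root s+1)).verts = t.verts.image (2 * ·) := by
    ext x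
    rw [mem_prune, graft_aboveSet_top hs hs1, mem_graft]
    simp only [Finset.mem_image]
    constructor
    · rintro ⟨⟨a, ha, rfl⟩ | ⟨b, hb, rfl⟩, h⟩
      · exact ⟨a, ha, rfl⟩
      · exact absurd ⟨b, hb, rfl⟩ h
    · rintro ⟨a, ha, rfl⟩
      exact ⟨Or.inl ⟨a, ha, rfl⟩, by rintro ⟨b, -, e⟩; omega⟩
  have hmem : ∀ {a}, a ∈ t.verts → 2*a ∈ (prune (graft s t v p) (2*root s+1)).verts :=
    fun ha => hverts ▸ Finset.mem_image_of_mem _ ha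
  refine ⟨?_, fun a ha b hb => ?_, fun a ha _ => graft_color_even (s := s) (v := v) a⟩
  · rw [hverts]
    exact Finset.bijOn_image_of_injective (fun x y h => by simpa using h) _
  · rw [prune_parent (hmem ha), graft_parent_even]
    simp

lemma isIsoMap_branch_graft_even (ht : t.WF) {a : ℕ} (hva : ¬ t.Anc v a) :
    IsIsoMap (branch t a) (branch (graft s t v p) (2*a)) (2 * ·) := by
  have hA := graft_aboveSet_even (s := s) (p := p) hva
  refine isIsoMap_of_parent_map (branch_wf ht) ?_ (fun z hz => ?_)
    (fun z _ _ => graft_color_even (s := s) (v := v) z)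
  · rw [show (branch (graft s t v p) (2*a)).verts = _ from hA]
    exact Finset.bijOn_image_of_injective (fun x y h => by simpa using h) _
  · by_cases hza : z = a
    · subst hza; simp [branch_parent_self]
    · have hz' : 2*z ∈ (graft s t v p).aboveSet (2*a) := hA ▸ Finset.mem_image_of_mem _ hz
      rw [branch_parent_of_ne hz hza, branch_parent_of_ne hz' (by omega), graft_parent_even]

lemma isIsoMap_graft_prune {a : ℕ} (hva : ¬ t.Anc v a) :
    IsIsoMap (graft s (prune t a) v p) (prune (graft s t v p) (2*a)) id := by
  have hverts : (graft s (prune t a) v p).verts = (prune (graft s t v p) (2*a)).verts := by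
    ext x
    rw [mem_prune, graft_aboveSet_even hva, mem_graft, mem_graft]
    simp only [mem_prune, Finset.mem_image]
    constructor
    · rintro (⟨c, ⟨hc, hcA⟩, rfl⟩ | ⟨b, hb, rfl⟩)
      · exact ⟨Or.inl ⟨c, hc, rfl⟩, fun ⟨c', hc', e⟩ => hcA ((show c' = c by omega) ▸ hc')⟩
      · exact ⟨Or.inr ⟨b, hb, rfl⟩, by rintro ⟨c', -, e⟩; omega⟩
    · rintro ⟨⟨c, hc, rfl⟩ | ⟨b, hb, rfl⟩, h⟩
      · exact Or.inl ⟨c, ⟨hc, fun hcA => h ⟨c, hcA, rfl⟩⟩, rfl⟩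
      · exact Or.inr ⟨b, hb, rfl⟩
  refine isIsoMap_id_of_eq hverts (fun x hx => ?_) (fun x hx _ => ?_)
  · rw [prune_parent (hverts ▸ hx)]
    rcases mem_graft.mp hx with ⟨c, hc, rfl⟩ | ⟨b, -, rfl⟩
    · rw [graft_parent_even, graft_parent_even, prune_parent hc]
    · simp [graft]
  · change (graft s t v p).color x = _
    rcases mem_graft.mp hx with ⟨c, -, rfl⟩ | ⟨b, -, rfl⟩
    · rw [graft_color_even, graft_color_even]; rfl
    · simp [graft]

lemma IsIsoMap.assemble (ht : t.WF) (hs' : s'.WF) (hs1' : s'.IsTree) {a y : ℕ}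
    (hpa : t.parent a = some y) {φ : ℕ → ℕ} (hφ : IsIsoMap (branch t a) s' φ) :
    IsIsoMap t (graft s' (prune t a) y (t.color a))
      (fun z => if z ∈ t.aboveSet a then 2 * φ z + 1 else 2 * z) :=
  hφ.comp (branch_wf ht) (isIsoMap_branch_graft_top hs' hs1') |>.glue ht
    (graft_wf hs' (prune_wf ht) (mem_prune.mpr ⟨(ht.1 _ _ hpa).2, parent_not_mem_aboveSet ht hpa⟩))
    hpa (graft_parent_odd_root hs1') (isIsoMap_prune_graft_top hs' hs1') rfl
    (graft_color_odd_root hs1')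

lemma isIsoMap_graft_top_branch_div (hs : s.WF) (hs1 : s.IsTree) (ht : t.WF)
    (hv : v ∈ t.verts) : IsIsoMap (branch (graft s t v p) (2*root s+1)) s (· / 2) := by
  have h := isIsoMap_branch_graft_top (t := t) (v := v) (p := p) hs hs1
  refine (h.symm (branch_wf (graft_wf hs ht hv))).congr fun x hx => ?_
  obtain ⟨b, hb, rfl⟩ := h.bijOn.surjOn hx
  simp [h.invFunOn_apply hb, two_mul_add_one_div_two]

lemma isIsoMap_graft_top_prune_div (hs : s.WF) (hs1 : s.IsTree) (ht : t.WF)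
    (hv : v ∈ t.verts) : IsIsoMap (prune (graft s t v p) (2*root s+1)) t (· / 2) := by
  have h := isIsoMap_prune_graft_top (t := t) (v := v) (p := p) hs hs1
  refine (h.symm (prune_wf (graft_wf hs ht hv))).congr fun x hx => ?_
  obtain ⟨a, ha, rfl⟩ := h.bijOn.surjOn hx
  simp [h.invFunOn_apply ha]

lemma mem_aboveSet_graft_top_iff (hs : s.WF) (hs1 : s.IsTree) {x : ℕ}
    (hx : x ∈ (graft s t v p).verts) : x ∈ (graft s t v p).aboveSet (2*root s+1) ↔ x % 2 = 1 := by
  rw [graft_aboveSet_top hs hs1, Finset.mem_image]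
  rcases mem_graft.mp hx with ⟨a, -, rfl⟩ | ⟨b, hb, rfl⟩
  · exact ⟨fun ⟨b, _, e⟩ => by omega, fun h => by omega⟩
  · exact ⟨fun _ => by omega, fun _ => ⟨b, hb, rfl⟩⟩

lemma IsIsoMap.graft_congr (hs : s.WF) (hs1 : s.IsTree) (hs' : s'.WF) (hs1' : s'.IsTree)
    (ht : t.WF) (ht' : t'.WF) (hv : v ∈ t.verts) {f g : ℕ → ℕ} (hg : IsIsoMap s s' g)
    (hf : IsIsoMap t t' f) (hfv : f v = v') :
    IsIsoMap (graft s t v p) (graft s' t' v' p)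
      (fun x => if x % 2 = 0 then 2 * f (x/2) else 2 * g (x/2) + 1) := by
  have hu := graft_wf (p := p) hs ht hv
  have hM := ((isIsoMap_graft_top_branch_div hs hs1 ht hv).comp (branch_wf hu) hg).comp
    (branch_wf hu) (isIsoMap_branch_graft_top (t := t') (v := v') (p := p) hs' hs1')
  have hR := ((isIsoMap_graft_top_prune_div hs hs1 ht hv).comp (prune_wf hu) hf).comp
    (prune_wf hu) (isIsoMap_prune_graft_top (s := s') (v := v') (p := p) hs' hs1')
  refine (hM.glue hu (graft_wf hs' ht' (hfv ▸ hf.maps hv)) (graft_parent_odd_root hs1)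
    (graft_parent_odd_root hs1') hR (by simp [hfv]) (by rw [graft_color_odd_root hs1,
      graft_color_odd_root hs1'])).congr fun x hx => ?_
  have := (mem_aboveSet_graft_top_iff hs hs1 hx).not
  by_cases h : x % 2 = 0 <;> simp_all

lemma IsIsoMap.graft_top_left (hs : s.WF) (hs1 : s.IsTree) (hs' : s'.WF) (hs1' : s'.IsTree)
    (ht : t.WF) (ht' : t'.WF) (hv : v ∈ t.verts) (hv' : v' ∈ t'.verts)
    (hΦ : IsIsoMap (graft s t v p) (graft s' t' v' q) Φ) (htop : Φ (2*root s+1) = 2*root s'+1) :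
    IsIsoMap s s' (fun b => Φ (2*b+1) / 2) := by
  have hu := graft_wf (p := p) hs ht hv
  have hB := htop ▸ hΦ.restrict_branch hu (graft_wf hs' ht' hv') (odd_mem_graft.mpr (root_mem hs1))
  exact ((isIsoMap_branch_graft_top hs hs1).comp hs hB).comp hs
    (isIsoMap_graft_top_branch_div hs' hs1' ht' hv')

lemma IsIsoMap.graft_top_right (hs : s.WF) (hs1 : s.IsTree) (hs' : s'.WF) (hs1' : s'.IsTree)
    (ht : t.WF) (ht' : t'.WF) (hv : v ∈ t.verts) (hv' : v' ∈ t'.verts)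
    (hΦ : IsIsoMap (graft s t v p) (graft s' t' v' q) Φ) (htop : Φ (2*root s+1) = 2*root s'+1) :
    IsIsoMap t t' (fun a => Φ (2*a) / 2) := by
  have hu := graft_wf (p := p) hs ht hv
  have hP := htop ▸ hΦ.restrict_prune hu (graft_wf hs' ht' hv') (odd_mem_graft.mpr (root_mem hs1))
  exact ((isIsoMap_prune_graft_top hs hs1).comp ht hP).comp ht
    (isIsoMap_graft_top_prune_div hs' hs1' ht' hv')

lemma IsIsoMap.graft_top_apply_even (hs : s.WF) (hs1 : s.IsTree) (hs' : s'.WF)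
    (hs1' : s'.IsTree) (ht : t.WF) (ht' : t'.WF) (hv : v ∈ t.verts) (hv' : v' ∈ t'.verts)
    (hΦ : IsIsoMap (graft s t v p) (graft s' t' v' q) Φ) (htop : Φ (2*root s+1) = 2*root s'+1)
    {a : ℕ} (ha : a ∈ t.verts) : Φ (2*a) = 2 * (Φ (2*a) / 2) := by
  have hu := graft_wf (p := p) hs ht hv
  have hP := htop ▸ hΦ.restrict_prune hu (graft_wf hs' ht' hv') (odd_mem_graft.mpr (root_mem hs1))
  obtain ⟨a', -, e⟩ :=
    (isIsoMap_prune_graft_top (t := t') (v := v') (p := q) hs' hs1').bijOn.surjOn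
      (hP.maps ((isIsoMap_prune_graft_top hs hs1).maps ha))
  simp only at e
  omega

lemma IsIsoMap.graft_top_apply_odd (hs : s.WF) (hs1 : s.IsTree) (hs' : s'.WF)
    (hs1' : s'.IsTree) (ht : t.WF) (ht' : t'.WF) (hv : v ∈ t.verts) (hv' : v' ∈ t'.verts)
    (hΦ : IsIsoMap (graft s t v p) (graft s' t' v' q) Φ) (htop : Φ (2*root s+1) = 2*root s'+1)
    {b : ℕ} (hb : b ∈ s.verts) : Φ (2*b+1) = 2 * (Φ (2*b+1) / 2) + 1 := by
  have hu := graft_wf (p := p) hs ht hv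
  have hB := htop ▸ hΦ.restrict_branch hu (graft_wf hs' ht' hv') (odd_mem_graft.mpr (root_mem hs1))
  obtain ⟨b', -, e⟩ :=
    (isIsoMap_branch_graft_top (t := t') (v := v') (p := q) hs' hs1').bijOn.surjOn
      (hB.maps ((isIsoMap_branch_graft_top hs hs1).maps hb))
  simp only at e
  omega

lemma IsIsoMap.graft_top_apply_parent (hs1 : s.IsTree) (hs1' : s'.IsTree) (hu : (graft s t v p).WF)
    (hΦ : IsIsoMap (graft s t v p) (graft s' t' v' q) Φ) (htop : Φ (2*root s+1) = 2*root s'+1) :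
    Φ (2*v) = 2*v' := by
  have := hΦ.parent_some hu (odd_mem_graft.mpr (root_mem hs1)) (graft_parent_odd_root hs1)
  rw [htop, graft_parent_odd_root hs1'] at this
  exact (Option.some_injective _ this).symm

lemma IsIsoMap.graft_top_color (hs1 : s.IsTree) (hs1' : s'.IsTree)
    (hΦ : IsIsoMap (graft s t v p) (graft s' t' v' q) Φ) (htop : Φ (2*root s+1) = 2*root s'+1) :
    q = p := by
  have := hΦ.color_eq _ (odd_mem_graft.mpr (root_mem hs1)) (by simp [graft_parent_odd_root hs1])
  rwa [htop, graft_color_odd_root hs1', graft_color_odd_root hs1] at this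

end GraftIsos

section Cancellation

variable {s t u u' : PForest n} {v : ℕ} {p : Fin n}

/-- `x` is the upper vertex of an edge counted by `n(s, t, u)`: deleting that edge leaves a copy
of `s` above `x` and a copy of `t` below. -/
def Splits (u s t : PForest n) (x : ℕ) : Prop :=
  x ∈ u.verts ∧ (u.parent x).isSome ∧ (∃ f, IsIsoMap (branch u x) s f) ∧
    ∃ f, IsIsoMap (prune u x) t f

lemma IsIsoMap.splits (hu : u.WF) (hu' : u'.WF) {Φ : ℕ → ℕ}
    (hΦ : IsIsoMap u u' Φ) {x : ℕ} (h : Splits u s t x) : Splits u' s t (Φ x) := by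
  obtain ⟨hx, hpx, ⟨f₁, hf₁⟩, ⟨f₂, hf₂⟩⟩ := h
  exact ⟨hΦ.maps hx, hΦ.isSome_parent hu hx hpx,
    ⟨_, ((hΦ.restrict_branch hu hu' hx).symm (branch_wf hu')).comp (branch_wf hu') hf₁⟩,
    ⟨_, ((hΦ.restrict_prune hu hu' hx).symm (prune_wf hu')).comp (prune_wf hu') hf₂⟩⟩

lemma splits_graft_top (hs : s.WF) (hs1 : s.IsTree) (ht : t.WF) (hv : v ∈ t.verts) :
    Splits (graft s t v p) s t (2*root s+1) :=
  ⟨odd_mem_graft.mpr (root_mem hs1), by simp [graft_parent_odd_root hs1],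
    ⟨_, isIsoMap_graft_top_branch_div hs hs1 ht hv⟩, ⟨_, isIsoMap_graft_top_prune_div hs hs1 ht hv⟩⟩

lemma eq_top_or_even_of_card_aboveSet (hs : s.WF) (hs1 : s.IsTree) {x : ℕ}
    (hx : x ∈ (graft s t v p).verts)
    (hcard : ((graft s t v p).aboveSet x).card = s.verts.card) :
    x = 2*root s+1 ∨ ∃ a ∈ t.verts, x = 2*a ∧ ¬ t.Anc v a := by
  rcases mem_graft.mp hx with ⟨a, ha, rfl⟩ | ⟨b, hb, rfl⟩
  · refine Or.inr ⟨a, ha, rfl, fun hva => ?_⟩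
    have hsub : insert (2*a) (s.verts.image (2 * · + 1)) ⊆ (graft s t v p).aboveSet (2*a) := by
      refine Finset.insert_subset (self_mem_aboveSet hx) fun z hz => ?_
      obtain ⟨b, hb, rfl⟩ := Finset.mem_image.mp hz
      exact mem_aboveSet.mpr ⟨odd_mem_graft.mpr hb, graft_anc_odd_even hs hs1 hb hva⟩
    have := Finset.card_le_card hsub
    rw [Finset.card_insert_of_notMem (by simp; omega), Finset.card_image_of_injective _
      (fun x y h => by simpa using h)] at this
    omega
  · left
    rw [graft_aboveSet_odd, Finset.card_image_of_injective _ (fun x y h => by simpa using h)]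
      at hcard
    have hr : root s ∈ s.aboveSet b := by
      rw [Finset.eq_of_subset_of_card_le aboveSet_subset hcard.ge]; exact root_mem hs1
    rw [eq_root_of_root_anc hs1 (mem_aboveSet.mp hr).2]

/-- The automorphism exchanges the grafted branch with the branch above `2 * a` and acts by `k`
on the rest. -/
lemma exists_aut_graft_top_eq_even (hs : s.WF) (hs1 : s.IsTree) (ht : t.WF) (hv : v ∈ t.verts)
    {a y : ℕ} (hpa : t.parent a = some y) (hva : ¬ t.Anc v a) {φ : ℕ → ℕ}
    (hφ : IsIsoMap (branch t a) s φ) (hcol : t.color a = p) {k : ℕ → ℕ}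
    (hk : IsIsoMap (prune t a) (prune t a) k) (hkv : k v = y) (hky : k y = v) :
    ∃ g, IsIsoMap (graft s t v p) (graft s t v p) g ∧ g (2*root s+1) = 2*a := by
  have hu := graft_wf (p := p) hs ht hv
  have ha := (ht.1 _ _ hpa).1
  have hvr : v ∈ (prune t a).verts := mem_prune.mpr ⟨hv, fun h => hva (mem_aboveSet.mp h).2⟩
  have hyr : y ∈ (prune t a).verts :=
    mem_prune.mpr ⟨(ht.1 _ _ hpa).2, parent_not_mem_aboveSet ht hpa⟩
  have hM := ((isIsoMap_graft_top_branch_div hs hs1 ht hv).comp (branch_wf hu)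
    (hφ.symm hs)).comp (branch_wf hu) (isIsoMap_branch_graft_even (s := s) (p := p) ht hva)
  have hA := hφ.assemble ht hs hs1 hpa
  have hT := (isIsoMap_id s).graft_congr hs hs1 hs hs1 (prune_wf ht) (prune_wf ht) hyr hk hky
    (p := t.color a)
  rw [hcol] at hA hT
  have hR := ((((isIsoMap_graft_top_prune_div hs hs1 ht hv).comp (prune_wf hu) hA).comp
    (prune_wf hu) hT).comp (prune_wf hu) (isIsoMap_graft_prune (s := s) (p := p) hva))
  have hφa : φ a = root s := by
    simpa [branch_root ht ha] using hφ.root_eq (branch_isTree ht ha) hs hs1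
  refine ⟨_, hM.glue hu hu (graft_parent_odd_root hs1)
    (show (graft s t v p).parent (2*a) = some (2*y) by simp [graft_parent_even, hpa]) hR
    ?_ (by rw [graft_color_even, graft_color_odd_root hs1, hcol]), ?_⟩
  · simp [mem_aboveSet, hva, hkv]
  · have htop : 2*root s+1 ∈ (graft s t v p).aboveSet (2*root s+1) :=
      self_mem_aboveSet (odd_mem_graft.mpr (root_mem hs1))
    simp only [if_pos htop, Function.comp, two_mul_add_one_div_two]
    rw [← hφa, hφ.invFunOn_apply (self_mem_aboveSet ha)]

def GraftCancels (s r : PForest n) : Prop :=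
  ∀ v ∈ r.verts, ∀ w ∈ r.verts, ∀ (p q : Fin n) (Φ : ℕ → ℕ),
    IsIsoMap (graft s r v p) (graft s r w q) Φ → q = p ∧ ∃ k, IsIsoMap r r k ∧ k v = w

lemma exists_aut_of_splits (hs : s.WF) (hs1 : s.IsTree) (ht : t.WF) (ht1 : t.IsTree)
    (hv : v ∈ t.verts) (hcancel : ∀ a ∈ t.verts, a ≠ root t → GraftCancels s (prune t a))
    {x : ℕ} (hx : Splits (graft s t v p) s t x) :
    ∃ g, IsIsoMap (graft s t v p) (graft s t v p) g ∧ g (2*root s+1) = x := by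
  obtain ⟨hxm, hxp, ⟨f₁, hf₁⟩, ⟨f₂, hf₂⟩⟩ := hx
  rcases eq_top_or_even_of_card_aboveSet hs hs1 hxm hf₁.card_eq with rfl | ⟨a, ha, rfl, hva⟩
  · exact ⟨id, isIsoMap_id _, rfl⟩
  obtain ⟨y, hpa⟩ : ∃ y, t.parent a = some y := by
    simpa [graft_parent_even, Option.isSome_iff_exists] using hxp
  have hna : a ≠ root t := fun e => by simp [e, parent_root ht1] at hpa
  have hvr : v ∈ (prune t a).verts := mem_prune.mpr ⟨hv, fun h => hva (mem_aboveSet.mp h).2⟩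
  have hyr : y ∈ (prune t a).verts :=
    mem_prune.mpr ⟨(ht.1 _ _ hpa).2, parent_not_mem_aboveSet ht hpa⟩
  have hu := graft_wf (p := p) hs ht hv
  have hφ := (isIsoMap_branch_graft_even (s := s) (p := p) ht hva).comp (branch_wf ht) hf₁
  have hchain := ((isIsoMap_graft_prune (s := s) (p := p) hva).comp (graft_wf hs (prune_wf ht) hvr)
    hf₂).comp (graft_wf hs (prune_wf ht) hvr) (hφ.assemble ht hs hs1 hpa)
  obtain ⟨hcol, k₀, hk₀, hk₀v⟩ := hcancel a ha hna v hvr y hyr p _ _ hchain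
  obtain ⟨k, hk, hkv, hky⟩ := exists_isIsoMap_swap (prune_wf ht) (prune_isTree ht1 hna) hk₀ hvr hk₀v
  exact exists_aut_graft_top_eq_even hs hs1 ht hv hpa hva hφ hcol hk hkv hky

theorem graftCancels (hs : s.WF) (hs1 : s.IsTree) (ht : t.WF) (ht1 : t.IsTree) :
    GraftCancels s t := by
  induction hN : t.verts.card using Nat.strong_induction_on generalizing t with
  | _ N ih =>
  intro v hv w hw p q Φ hΦ
  have hu := graft_wf (p := p) hs ht hv
  have hu' := graft_wf (p := q) hs ht hw
  have hcancel : ∀ a ∈ t.verts, a ≠ root t → GraftCancels s (prune t a) := fun a ha hna =>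
    ih _ (hN ▸ card_prune ▸ Nat.sub_lt (Finset.card_pos.mpr ⟨a, ha⟩)
      (Finset.card_pos.mpr ⟨a, self_mem_aboveSet ha⟩)) (prune_wf ht) (prune_isTree ht1 hna) rfl
  obtain ⟨g, hg, hgtop⟩ := exists_aut_of_splits hs hs1 ht ht1 hw hcancel
    (hΦ.splits hu hu' (splits_graft_top hs hs1 ht hv))
  have hΨ := hΦ.comp hu (hg.symm hu')
  have htop : (Function.invFunOn g (graft s t w q).verts ∘ Φ) (2*root s+1) = 2*root s+1 := by
    rw [Function.comp_apply, ← hgtop, hg.invFunOn_apply (odd_mem_graft.mpr (root_mem hs1))]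
  have h2v := hΨ.graft_top_apply_parent hs1 hs1 hu htop
  exact ⟨hΨ.graft_top_color hs1 hs1 htop, _, hΨ.graft_top_right hs hs1 hs hs1 ht ht hv hw htop,
    by simp only [h2v]; omega⟩

end Cancellation

section Restrict

variable {s t u : PForest n} {x : ℕ}

lemma wf_of_parent_eq {A B : PForest n} (hB : B.WF) (hverts : A.verts = B.verts)
    (hpar : ∀ z ∈ A.verts, A.parent z = B.parent z)
    (hoff : ∀ z ∉ A.verts, A.parent z = none) : A.WF := by
  obtain ⟨hm, rk, hrk⟩ := hB
  refine ⟨fun z w hp => ?_, rk, fun z w hp => ?_⟩ <;> by_cases hz : z ∈ A.verts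
  · rw [hpar z hz] at hp; exact ⟨hz, hverts ▸ (hm _ _ hp).2⟩
  · simp [hoff z hz] at hp
  · rw [hpar z hz] at hp; exact hrk _ _ hp
  · simp [hoff z hz] at hp

lemma restrict_verts_of_subset {S : Finset ℕ} (hS : S ⊆ u.verts) : (u.restrict S).verts = S :=
  Finset.inter_eq_left.mpr hS

lemma restrict_parent_of_not_mem {S : Finset ℕ} {z : ℕ} (hz : z ∉ (u.restrict S).verts) :
    (u.restrict S).parent z = none :=
  if_neg hz

lemma restrict_aboveSet_parent (hu : u.WF) (hcard : u.verts.card ≠ 0) (hx : x ∈ u.verts)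
    {z : ℕ} (hz : z ∈ u.aboveSet x) :
    (u.restrict (u.aboveSet x)).parent z = (branch u x).parent z := by
  rw [show (u.restrict (u.aboveSet x)).parent z = u.nearestAnc (u.aboveSet x) z from
    if_pos (Finset.mem_inter.mpr ⟨hz, aboveSet_subset hz⟩)]
  by_cases hzx : z = x
  · subst hzx
    rw [branch_parent_self]
    refine nearestAnc_eq_none hu hx fun w hw hwS => ?_
    simp only [strictAnc, Finset.mem_filter] at hw
    exact hw.2.2 (anc_antisymm hu (mem_aboveSet.mp hwS).2 hw.2.1)
  · obtain ⟨w, hw, hwS⟩ := exists_parent_of_mem_aboveSet hu hz hzx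
    rw [nearestAnc_of_parent_mem hcard hw hwS, branch_parent_of_ne hz hzx, hw]

lemma restrict_prune_parent (hu : u.WF) (hcard : u.verts.card ≠ 0) {z : ℕ}
    (hz : z ∈ (prune u x).verts) :
    (u.restrict (u.verts \ u.aboveSet x)).parent z = (prune u x).parent z := by
  rw [show (u.restrict (u.verts \ u.aboveSet x)).parent z = u.nearestAnc _ z from
    if_pos (Finset.mem_inter.mpr ⟨hz, (mem_prune.mp hz).1⟩), prune_parent hz]
  cases hp : u.parent z with
  | none => exact nearestAnc_of_parent_eq_none hcard hp
  | some w =>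
    exact nearestAnc_of_parent_mem hcard hp ((prune_wf hu).1 _ _ (prune_parent hz ▸ hp)).2

lemma isIsoMap_restrict_aboveSet (hu : u.WF) (hcard : u.verts.card ≠ 0) (hx : x ∈ u.verts) :
    IsIsoMap (u.restrict (u.aboveSet x)) (branch u x) id := by
  have hverts := restrict_verts_of_subset (aboveSet_subset (t := u) (x := x))
  refine isIsoMap_id_of_eq hverts (fun z hz => restrict_aboveSet_parent hu hcard hx
    (hverts ▸ hz)) fun z hz hp => ?_
  rw [hverts] at hz
  rw [restrict_aboveSet_parent hu hcard hx hz] at hp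
  have hzx : z ≠ x := by rintro rfl; simp [branch_parent_self] at hp
  obtain ⟨w, hw, hwS⟩ := exists_parent_of_mem_aboveSet hu hz hzx
  exact congrArg u.color (lastBefore_of_parent_mem hcard hw hwS).symm

lemma isIsoMap_restrict_prune (hu : u.WF) (hcard : u.verts.card ≠ 0) :
    IsIsoMap (u.restrict (u.verts \ u.aboveSet x)) (prune u x) id := by
  have hverts := restrict_verts_of_subset (Finset.sdiff_subset (s := u.verts) (t := u.aboveSet x))
  refine isIsoMap_id_of_eq hverts
    (fun z hz => restrict_prune_parent hu hcard (hverts ▸ hz : z ∈ u.verts \ u.aboveSet x))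
    fun z hz hp => ?_
  rw [hverts] at hz
  rw [restrict_prune_parent hu hcard hz] at hp
  obtain ⟨w, hw⟩ := Option.isSome_iff_exists.mp hp
  rw [prune_parent hz] at hw
  exact congrArg u.color (lastBefore_of_parent_mem hcard hw
    ((prune_wf hu).1 _ _ (prune_parent hz ▸ hw)).2).symm

lemma restrict_aboveSet_wf (hu : u.WF) (hcard : u.verts.card ≠ 0) (hx : x ∈ u.verts) :
    (u.restrict (u.aboveSet x)).WF := by
  have hverts := restrict_verts_of_subset (aboveSet_subset (t := u) (x := x))
  exact wf_of_parent_eq (branch_wf hu) hverts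
    (fun z hz => restrict_aboveSet_parent hu hcard hx (hverts ▸ hz))
    fun _ hz => restrict_parent_of_not_mem hz

lemma restrict_prune_wf (hu : u.WF) (hcard : u.verts.card ≠ 0) :
    (u.restrict (u.verts \ u.aboveSet x)).WF := by
  have hverts := restrict_verts_of_subset (Finset.sdiff_subset (s := u.verts) (t := u.aboveSet x))
  exact wf_of_parent_eq (prune_wf hu) hverts
    (fun z hz => restrict_prune_parent hu hcard (hverts ▸ hz : z ∈ u.verts \ u.aboveSet x))
    fun _ hz => restrict_parent_of_not_mem hz

lemma piso_restrict_aboveSet_iff (hu : u.WF) (hcard : u.verts.card ≠ 0) (hx : x ∈ u.verts) :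
    PIso (u.restrict (u.aboveSet x)) s ↔ ∃ f, IsIsoMap (branch u x) s f := by
  have h := isIsoMap_restrict_aboveSet hu hcard hx
  refine ⟨fun hP => ?_, fun ⟨f, hf⟩ => (h.comp (restrict_aboveSet_wf hu hcard hx) hf).piso⟩
  obtain ⟨g, hg⟩ := hP.exists_isIsoMap
  exact ⟨_, (h.symm (branch_wf hu)).comp (branch_wf hu) hg⟩

lemma piso_restrict_prune_iff (hu : u.WF) (hcard : u.verts.card ≠ 0) :
    PIso (u.restrict (u.verts \ u.aboveSet x)) t ↔ ∃ f, IsIsoMap (prune u x) t f := by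
  have h := isIsoMap_restrict_prune (x := x) hu hcard
  refine ⟨fun hP => ?_, fun ⟨f, hf⟩ => (h.comp (restrict_prune_wf hu hcard) hf).piso⟩
  obtain ⟨g, hg⟩ := hP.exists_isIsoMap
  exact ⟨_, (h.symm (prune_wf hu)).comp (prune_wf hu) hg⟩

lemma nCount_eq_card_splits (hu : u.WF) (hcard : u.verts.card ≠ 0) :
    nCount s t u = (u.verts.filter (Splits u s t)).card := by
  refine congrArg Finset.card (Finset.filter_congr fun x hx => ?_)
  rw [piso_restrict_aboveSet_iff hu hcard hx, piso_restrict_prune_iff hu hcard]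
  exact ⟨fun h => ⟨hx, h⟩, fun h => h.2⟩

end Restrict

section AutGroup

variable {s t : PForest n} {e f : {x // x ∈ t.verts} ≃ {x // x ∈ t.verts}}

lemma IsIsoFn.trans (ht : t.WF) (he : IsIsoFn t t e) (hf : IsIsoFn t t f) :
    IsIsoFn t t (e.trans f) := by
  refine isIsoFn_iff_isIsoMap.mpr ((he.isIsoMap.comp ht hf.isIsoMap).congr fun x hx => ?_)
  simp [equivFn_apply hx, equivFn_apply (e ⟨x, hx⟩).2]

lemma IsIsoFn.symm (ht : t.WF) (he : IsIsoFn t t e) : IsIsoFn t t e.symm := by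
  refine isIsoFn_iff_isIsoMap.mpr ((he.isIsoMap.symm ht).congr fun x hx => ?_)
  have := he.isIsoMap.invFunOn_apply (e.symm ⟨x, hx⟩).2
  rw [equivFn_apply (e.symm ⟨x, hx⟩).2, Equiv.apply_symm_apply] at this
  rw [equivFn_apply hx]
  simpa using this

def autGroup (t : PForest n) (ht : t.WF) : Subgroup (Equiv.Perm {x // x ∈ t.verts}) where
  carrier := {e | IsIsoFn t t e}
  one_mem' := ⟨fun _ _ => Iff.rfl, fun _ _ => rfl⟩
  mul_mem' ha hb := IsIsoFn.trans ht hb ha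
  inv_mem' ha := IsIsoFn.symm ht ha

lemma autCount_eq_card_autGroup (ht : t.WF) : autCount t = Nat.card (autGroup t ht) :=
  Nat.card_congr (Equiv.subtypeEquivRight fun _ => Iff.rfl)

lemma card_orbit_autGroup (ht : t.WF) {v : ℕ} (hv : v ∈ t.verts) :
    Nat.card (MulAction.orbit (autGroup t ht) (⟨v, hv⟩ : {x // x ∈ t.verts})) =
      orbitCount t v hv := by
  refine Nat.card_congr (Equiv.subtypeEquivRight fun w => ?_)
  rw [MulAction.mem_orbit_iff]
  exact ⟨fun ⟨g, hg⟩ => ⟨g.1, g.2, hg⟩, fun ⟨e, he, hev⟩ => ⟨⟨e, he⟩, hev⟩⟩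

variable {v : ℕ} {p : Fin n}

lemma mem_orbit_graft_top_iff (hs : s.WF) (hs1 : s.IsTree) (ht : t.WF) (ht1 : t.IsTree)
    (hv : v ∈ t.verts) (x : {x // x ∈ (graft s t v p).verts}) :
    x ∈ MulAction.orbit (autGroup (graft s t v p) (graft_wf hs ht hv))
        ⟨2*root s+1, odd_mem_graft.mpr (root_mem hs1)⟩ ↔ Splits (graft s t v p) s t x := by
  have hu := graft_wf (p := p) hs ht hv
  rw [MulAction.mem_orbit_iff]
  constructor
  · rintro ⟨g, rfl⟩
    have := g.2.isIsoMap.splits hu hu (splits_graft_top hs hs1 ht hv)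
    rwa [equivFn_apply] at this
  · intro hx
    obtain ⟨g, hg, hgx⟩ := exists_aut_of_splits hs hs1 ht ht1 hv
      (fun a _ hna => graftCancels hs hs1 (prune_wf ht) (prune_isTree ht1 hna)) hx
    exact ⟨⟨hg.equiv, hg.isIsoFn_equiv⟩, Subtype.ext hgx⟩

lemma card_orbit_graft_top (hs : s.WF) (hs1 : s.IsTree) (ht : t.WF) (ht1 : t.IsTree)
    (hv : v ∈ t.verts) :
    Nat.card (MulAction.orbit (autGroup (graft s t v p) (graft_wf hs ht hv))
      (⟨2*root s+1, odd_mem_graft.mpr (root_mem hs1)⟩ : {x // x ∈ (graft s t v p).verts})) =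
      nCount s t (graft s t v p) := by
  rw [nCount_eq_card_splits (graft_wf hs ht hv)
    (Finset.card_ne_zero_of_mem (odd_mem_graft.mpr (root_mem hs1))), ← Nat.card_eq_finsetCard]
  exact Nat.card_congr ((Equiv.subtypeEquivRight (mem_orbit_graft_top_iff hs hs1 ht ht1 hv)).trans
    ((Equiv.subtypeSubtypeEquivSubtypeInter _ _).trans
      (Equiv.subtypeEquivRight fun _ => Finset.mem_filter.symm)))

end AutGroup

section Stabilizer

variable {s t : PForest n}

/-- Automorphisms as functions on `ℕ`, normalised to the identity off the vertices so that they
are determined by their values. -/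
def AutFn (t : PForest n) : Type := {f : ℕ → ℕ // IsIsoMap t t f ∧ ∀ x ∉ t.verts, f x = x}

def autFnEquiv (t : PForest n) : {e // IsIsoFn t t e} ≃ AutFn t where
  toFun e := ⟨equivFn e.1, e.2.isIsoMap, fun _ hx => dif_neg hx⟩
  invFun f := ⟨f.2.1.equiv, f.2.1.isIsoFn_equiv⟩
  left_inv e := Subtype.ext (Equiv.ext fun x => Subtype.ext (equivFn_apply x.2))
  right_inv f := Subtype.ext (funext fun x => by
    by_cases hx : x ∈ t.verts
    · exact equivFn_apply hx
    · exact (dif_neg hx).trans (f.2.2 x hx).symm)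

lemma autCount_eq_card_autFn : autCount t = Nat.card (AutFn t) :=
  Nat.card_congr (autFnEquiv t)

lemma card_stabilizer_autGroup (ht : t.WF) (x : {x // x ∈ t.verts}) :
    Nat.card (MulAction.stabilizer (autGroup t ht) x) = Nat.card {f : AutFn t // f.1 x = x} := by
  refine Nat.card_congr ((Equiv.subtypeEquiv (q := fun e : {e // IsIsoFn t t e} => e.1 x = x)
    (Equiv.subtypeEquivRight fun _ => Iff.rfl) fun _ => MulAction.mem_stabilizer_iff).trans
    ((autFnEquiv t).subtypeEquiv fun e => ?_))
  change e.1 x = x ↔ equivFn e.1 x = x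
  rw [equivFn_apply x.2, Subtype.ext_iff]

def AutFn.ofIsIsoMap {f : ℕ → ℕ} (h : IsIsoMap t t f) : AutFn t :=
  ⟨fun x => if x ∈ t.verts then f x else x, h.congr fun _ hx => (if_pos hx).symm,
    fun _ hx => if_neg hx⟩

lemma AutFn.ofIsIsoMap_apply {f : ℕ → ℕ} (h : IsIsoMap t t f) {x : ℕ} (hx : x ∈ t.verts) :
    (AutFn.ofIsIsoMap h).1 x = f x :=
  if_pos hx

variable {v : ℕ} {p : Fin n}

def stabilizerGraftTopEquiv (hs : s.WF) (hs1 : s.IsTree) (ht : t.WF) (hv : v ∈ t.verts) :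
    {Φ : AutFn (graft s t v p) // Φ.1 (2*root s+1) = 2*root s+1} ≃
      AutFn s × {f : AutFn t // f.1 v = v} where
  toFun Φ := (AutFn.ofIsIsoMap (Φ.1.2.1.graft_top_left hs hs1 hs hs1 ht ht hv hv Φ.2),
    ⟨AutFn.ofIsIsoMap (Φ.1.2.1.graft_top_right hs hs1 hs hs1 ht ht hv hv Φ.2), by
      rw [AutFn.ofIsIsoMap_apply _ hv,
        Φ.1.2.1.graft_top_apply_parent hs1 hs1 (graft_wf hs ht hv) Φ.2]
      omega⟩)
  invFun gf := ⟨AutFn.ofIsIsoMap (gf.1.2.1.graft_congr hs hs1 hs hs1 ht ht hv gf.2.1.2.1 gf.2.2),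
    by
      rw [AutFn.ofIsIsoMap_apply _ (odd_mem_graft.mpr (root_mem hs1))]
      simp [two_mul_add_one_div_two, gf.1.2.1.root_eq hs1 hs hs1]⟩
  left_inv Φ := by
    refine Subtype.ext (Subtype.ext (funext fun x => ?_))
    by_cases hx : x ∈ (graft s t v p).verts
    · rw [AutFn.ofIsIsoMap_apply _ hx]
      rcases mem_graft.mp hx with ⟨a, ha, rfl⟩ | ⟨b, hb, rfl⟩
      · simp only [Nat.mul_mod_right, if_true, Nat.mul_div_cancel_left a two_pos,
          AutFn.ofIsIsoMap_apply _ ha]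
        exact (Φ.1.2.1.graft_top_apply_even hs hs1 hs hs1 ht ht hv hv Φ.2 ha).symm
      · simp only [two_mul_add_one_div_two, AutFn.ofIsIsoMap_apply _ hb]
        rw [if_neg (by omega)]
        exact (Φ.1.2.1.graft_top_apply_odd hs hs1 hs hs1 ht ht hv hv Φ.2 hb).symm
    · exact (if_neg hx).trans (Φ.1.2.2 x hx).symm
  right_inv gf := by
    refine Prod.ext (Subtype.ext (funext fun b => ?_))
      (Subtype.ext (Subtype.ext (funext fun a => ?_)))
    · by_cases hb : b ∈ s.verts
      · simp [AutFn.ofIsIsoMap_apply _ hb, AutFn.ofIsIsoMap_apply _ (odd_mem_graft.mpr hb),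
          two_mul_add_one_div_two]
      · exact (if_neg hb).trans (gf.1.2.2 b hb).symm
    · by_cases ha : a ∈ t.verts
      · simp [AutFn.ofIsIsoMap_apply _ ha, AutFn.ofIsIsoMap_apply _ (even_mem_graft.mpr ha)]
      · exact (if_neg ha).trans (gf.2.1.2.2 a ha).symm

end Stabilizer

end PForest

end

open PForest in
theorem aut_graft_count {n : ℕ} (s t : PForest n)
    (hs : s.WF ∧ s.IsTree) (ht : t.WF ∧ t.IsTree)
    (v : ℕ) (hv : v ∈ t.verts) (p : Fin n) :
    autCount s * autCount t * nCount s t (graft s t v p)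
      = autCount (graft s t v p) * orbitCount t v hv := by
  obtain ⟨hsw, hs1⟩ := hs
  obtain ⟨htw, ht1⟩ := ht
  have hu := graft_wf (p := p) hsw htw hv
  have horbit_t := MulAction.card_orbit_mul_card_stabilizer (autGroup t htw)
    (⟨v, hv⟩ : {x // x ∈ t.verts})
  have horbit_u := MulAction.card_orbit_mul_card_stabilizer (autGroup _ hu)
    (⟨2*root s+1, odd_mem_graft.mpr (root_mem hs1)⟩ : {x // x ∈ (graft s t v p).verts})
  rw [card_orbit_autGroup, card_stabilizer_autGroup, ← autCount_eq_card_autGroup] at horbit_t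
  rw [card_orbit_graft_top hsw hs1 htw ht1 hv, card_stabilizer_autGroup,
    Nat.card_congr (stabilizerGraftTopEquiv hsw hs1 htw hv), Nat.card_prod,
    ← autCount_eq_card_autFn, ← autCount_eq_card_autGroup] at horbit_u
  rw [← horbit_t, ← horbit_u]
  ring
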